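/- arXiv:1411.1013 — 14 statements merged into one kernel-verified Lean document; each statement's English description precedes it below -/
import Mathlib

section
/- Let I ⊆ ℝ be an open interval, let α : ℝ → ℝ³ be smooth, and let T, N, B : ℝ → ℝ³ and τ : ℝ → ℝ be smooth maps such that on I: α' = T, T' = N, N' = −ε_T ε_N T + τ B, and B' = −ε_N ε_B τ N, where ε_T, ε_N, ε_B ∈ {−1, 1} are fixed signs. Then for every s ∈ I, det(α⁽³⁾(s), α⁽⁴⁾(s), α⁽⁵⁾(s)) = det(T(s), N(s), B(s)) · ( τ''(s)·(1 + ε_T ε_B · τ(s)²) − 3 ε_T ε_B · τ(s) · τ'(s)² ). -/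
noncomputable section

/-- Determinant of the 3×3 matrix with rows `u`, `v`, `w`. -/
def det3 (u v w : Fin 3 → ℝ) : ℝ := Matrix.det (Matrix.of ![u, v, w])

theorem stmt_0 (I : Set ℝ) (hIopen : IsOpen I) (hIconn : I.OrdConnected)
    (α T N B : ℝ → (Fin 3 → ℝ)) (τ : ℝ → ℝ)
    (hα : ContDiff ℝ (⊤ : ℕ∞) α) (hT : ContDiff ℝ (⊤ : ℕ∞) T)
    (hN : ContDiff ℝ (⊤ : ℕ∞) N) (hB : ContDiff ℝ (⊤ : ℕ∞) B)
    (hτ : ContDiff ℝ (⊤ : ℕ∞) τ)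
    (εT εN εB : ℝ)
    (hεT : εT = 1 ∨ εT = -1) (hεN : εN = 1 ∨ εN = -1) (hεB : εB = 1 ∨ εB = -1)
    (hα' : ∀ s ∈ I, deriv α s = T s)
    (hT' : ∀ s ∈ I, deriv T s = N s)
    (hN' : ∀ s ∈ I, deriv N s = (-(εT * εN)) • T s + τ s • B s)
    (hB' : ∀ s ∈ I, deriv B s = (-(εN * εB * τ s)) • N s) :
    ∀ s ∈ I,
      det3 (iteratedDeriv 3 α s) (iteratedDeriv 4 α s) (iteratedDeriv 5 α s) =
        det3 (T s) (N s) (B s) *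
          (deriv (deriv τ) s * (1 + εT * εB * τ s ^ 2) -
            3 * (εT * εB) * τ s * (deriv τ s) ^ 2) := by
  have dT : Differentiable ℝ T := hT.differentiable (by simp)
  have dN : Differentiable ℝ N := hN.differentiable (by simp)
  have dB : Differentiable ℝ B := hB.differentiable (by simp)
  have dτ : Differentiable ℝ τ := hτ.differentiable (by simp)
  have dτ' : Differentiable ℝ (deriv τ) :=
    ((contDiff_infty_iff_deriv.mp hτ).2).differentiable (by simp)
  have key : ∀ (f g : ℝ → (Fin 3 → ℝ)), (∀ x ∈ I, f x = g x) →
      ∀ x ∈ I, deriv f x = deriv g x := by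
    intro f g h x hx
    exact Filter.EventuallyEq.deriv_eq
      (Filter.eventuallyEq_of_mem (hIopen.mem_nhds hx) h)
  have h2 : ∀ x ∈ I, iteratedDeriv 2 α x = N x := by
    intro x hx
    rw [show iteratedDeriv 2 α = deriv (iteratedDeriv 1 α) from iteratedDeriv_succ,
      iteratedDeriv_one, key _ _ hα' x hx, hT' x hx]
  have h3 : ∀ x ∈ I, iteratedDeriv 3 α x =
      (-(εT * εN)) • T x + τ x • B x := by
    intro x hx
    rw [show iteratedDeriv 3 α = deriv (iteratedDeriv 2 α) from iteratedDeriv_succ,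
      key _ _ h2 x hx, hN' x hx]
  have h4 : ∀ x ∈ I, iteratedDeriv 4 α x =
      (-(εT * εN)) • N x + deriv τ x • B x + (-(εN * εB) * τ x ^ 2) • N x := by
    intro x hx
    rw [show iteratedDeriv 4 α = deriv (iteratedDeriv 3 α) from iteratedDeriv_succ,
      key _ _ h3 x hx]
    have H : HasDerivAt (fun t => (-(εT * εN)) • T t + τ t • B t)
        ((-(εT * εN)) • deriv T x + (τ x • deriv B x + deriv τ x • B x)) x :=
      by have := ((dT x).hasDerivAt.const_smul (-(εT * εN))).add
            ((dτ x).hasDerivAt.smul (dB x).hasDerivAt)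
         exact this
    rw [H.deriv, hT' x hx, hB' x hx]
    ext i
    simp [smul_eq_mul]
    ring
  have h5 : ∀ x ∈ I, iteratedDeriv 5 α x =
      ((εT * εN) * (εT * εN) + εN * εB * τ x ^ 2 * (εT * εN)) • T x
      + (-3 * (εN * εB) * τ x * deriv τ x) • N x
      + (deriv (deriv τ) x + (-(εT * εN)) * τ x - εN * εB * τ x ^ 3) • B x := by
    intro x hx
    rw [show iteratedDeriv 5 α = deriv (iteratedDeriv 4 α) from iteratedDeriv_succ,
      key _ _ h4 x hx]
    have Hc : HasDerivAt (fun t => -(εN * εB) * τ t ^ 2)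
        (-(εN * εB) * (((2 : ℕ) : ℝ) * τ x ^ 1 * deriv τ x)) x :=
      (((dτ x).hasDerivAt.pow 2)).const_mul _
    have H : HasDerivAt
        (fun t => (-(εT * εN)) • N t + deriv τ t • B t + (-(εN * εB) * τ t ^ 2) • N t)
        ((-(εT * εN)) • deriv N x
          + (deriv τ x • deriv B x + deriv (deriv τ) x • B x)
          + ((-(εN * εB) * τ x ^ 2) • deriv N x
            + (-(εN * εB) * (((2 : ℕ) : ℝ) * τ x ^ 1 * deriv τ x)) • N x)) x :=
      by have := (((dN x).hasDerivAt.const_smul (-(εT * εN))).add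
            ((dτ' x).hasDerivAt.smul (dB x).hasDerivAt)).add
            (Hc.smul (dN x).hasDerivAt)
         exact this
    rw [H.deriv, hN' x hx, hB' x hx]
    ext i
    simp [smul_eq_mul]
    ring
  intro s hs
  rw [h3 s hs, h4 s hs, h5 s hs]
  simp only [det3, Matrix.det_fin_three, Matrix.of_apply, Matrix.cons_val',
    Matrix.cons_val_zero, Matrix.cons_val_one, Matrix.head_cons,
    Matrix.empty_val', Matrix.cons_val_fin_one, Matrix.head_fin_const,
    Matrix.cons_val_two, Matrix.tail_cons, Pi.add_apply, Pi.smul_apply,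
    smul_eq_mul]
  rcases hεT with rfl | rfl <;> rcases hεN with rfl | rfl <;>
    rcases hεB with rfl | rfl <;> ring
end
end

section
/- Let I ⊆ ℝ be an open interval, let α : ℝ → ℝ³ be smooth, and let T, N, B : ℝ → ℝ³ and τ : ℝ → ℝ be smooth maps such that on I: α' = T, T' = N, N' = −ε_T ε_N T + τ B, B' = −ε_N ε_B τ N, where ε_T, ε_N, ε_B ∈ {−1, 1} are fixed signs with ε_T ε_B = −1, and suppose det(T(s), N(s), B(s)) ≠ 0 for all s ∈ I. Then det(α⁽³⁾(s), α⁽⁴⁾(s), α⁽⁵⁾(s)) = 0 for all s ∈ I if and only if τ''(s)·(1 − τ(s)²) + 3 τ(s) τ'(s)² = 0 for all s ∈ I. -/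
noncomputable section

lemma det3_combo (t n b : Fin 3 → ℝ) (a c p q x y z : ℝ) :
    det3 (a • t + c • b) (p • n + q • b) ((x • t + y • n) + z • b)
      = (a*p*z - a*q*y - c*p*x) * det3 t n b := by
  simp [det3, Matrix.det_fin_three]
  ring

theorem stmt_1 (I : Set ℝ) (hIopen : IsOpen I) (hIconn : I.OrdConnected)
    (α T N B : ℝ → (Fin 3 → ℝ)) (τ : ℝ → ℝ)
    (hα : ContDiff ℝ (⊤ : ℕ∞) α) (hT : ContDiff ℝ (⊤ : ℕ∞) T)
    (hN : ContDiff ℝ (⊤ : ℕ∞) N) (hB : ContDiff ℝ (⊤ : ℕ∞) B)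
    (hτ : ContDiff ℝ (⊤ : ℕ∞) τ)
    (εT εN εB : ℝ)
    (hεT : εT = 1 ∨ εT = -1) (hεN : εN = 1 ∨ εN = -1) (hεB : εB = 1 ∨ εB = -1)
    (hεTB : εT * εB = -1)
    (hα' : ∀ s ∈ I, deriv α s = T s)
    (hT' : ∀ s ∈ I, deriv T s = N s)
    (hN' : ∀ s ∈ I, deriv N s = (-(εT * εN)) • T s + τ s • B s)
    (hB' : ∀ s ∈ I, deriv B s = (-(εN * εB * τ s)) • N s)
    (hdet : ∀ s ∈ I, det3 (T s) (N s) (B s) ≠ 0) :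
    (∀ s ∈ I,
        det3 (iteratedDeriv 3 α s) (iteratedDeriv 4 α s) (iteratedDeriv 5 α s) = 0) ↔
      (∀ s ∈ I,
        deriv (deriv τ) s * (1 - τ s ^ 2) + 3 * τ s * (deriv τ s) ^ 2 = 0) := by
  have hε2 : (εT * εN) ^ 2 = 1 := by
    rcases hεT with h | h <;> rcases hεN with h' | h' <;> subst h <;> subst h' <;> norm_num
  have hB2 : εB = -εT := by
    rcases hεT with h | h <;> subst h <;> linarith
  have hNB : ∀ r : ℝ, -(εN * εB * r) = (εT * εN) * r := by
    intro r; rw [hB2]; ring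
  have hTdiff : Differentiable ℝ T := hT.differentiable (by simp)
  have hNdiff : Differentiable ℝ N := hN.differentiable (by simp)
  have hBdiff : Differentiable ℝ B := hB.differentiable (by simp)
  have hτdiff : Differentiable ℝ τ := hτ.differentiable (by simp)
  have hτ'cd : ContDiff ℝ (⊤ : ℕ∞) (deriv τ) := (contDiff_infty_iff_deriv.mp hτ).2
  have hτ'diff : Differentiable ℝ (deriv τ) := hτ'cd.differentiable (by simp)
  -- pointwise HasDerivAt facts
  have hTd : ∀ s ∈ I, HasDerivAt T (N s) s := by
    intro s hs
    have := (hTdiff s).hasDerivAt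
    rwa [hT' s hs] at this
  have hNd : ∀ s ∈ I, HasDerivAt N ((-(εT * εN)) • T s + τ s • B s) s := by
    intro s hs
    have := (hNdiff s).hasDerivAt
    rwa [hN' s hs] at this
  have hBd : ∀ s ∈ I, HasDerivAt B (((εT * εN) * τ s) • N s) s := by
    intro s hs
    have := (hBdiff s).hasDerivAt
    rw [hB' s hs, hNB (τ s)] at this
    exact this
  have d2 : ∀ s ∈ I, iteratedDeriv 2 α s = N s := by
    intro s hs
    have hev : deriv α =ᶠ[nhds s] T := Filter.eventuallyEq_of_mem (hIopen.mem_nhds hs) hα'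
    rw [show iteratedDeriv 2 α = deriv (iteratedDeriv 1 α) from iteratedDeriv_succ (n := 1), iteratedDeriv_one, hev.deriv_eq,
      hT' s hs]
  have d3 : ∀ s ∈ I, iteratedDeriv 3 α s = (-(εT * εN)) • T s + τ s • B s := by
    intro s hs
    have hev : iteratedDeriv 2 α =ᶠ[nhds s] N :=
      Filter.eventuallyEq_of_mem (hIopen.mem_nhds hs) d2
    rw [show iteratedDeriv 3 α = deriv (iteratedDeriv 2 α) from iteratedDeriv_succ (n := 2), hev.deriv_eq, hN' s hs]
  have d4 : ∀ s ∈ I, iteratedDeriv 4 α s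
      = ((εT * εN) * (τ s ^ 2 - 1)) • N s + deriv τ s • B s := by
    intro s hs
    have hev : iteratedDeriv 3 α =ᶠ[nhds s] fun t => (-(εT * εN)) • T t + τ t • B t :=
      Filter.eventuallyEq_of_mem (hIopen.mem_nhds hs) d3
    have hd : HasDerivAt (fun t => (-(εT * εN)) • T t + τ t • B t)
        ((-(εT * εN)) • N s + (τ s • (((εT * εN) * τ s) • N s) + deriv τ s • B s)) s :=
      (((hTd s hs).const_smul (-(εT * εN))).add
        (((hτdiff s).hasDerivAt).smul (hBd s hs)))
    rw [show iteratedDeriv 4 α = deriv (iteratedDeriv 3 α) from iteratedDeriv_succ (n := 3), hev.deriv_eq, hd.deriv]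
    funext i
    simp only [Pi.add_apply, Pi.smul_apply, smul_eq_mul]
    ring
  have d5 : ∀ s ∈ I, iteratedDeriv 5 α s
      = ((1 - τ s ^ 2) • T s + (3 * (εT * εN) * τ s * deriv τ s) • N s)
        + ((εT * εN) * τ s * (τ s ^ 2 - 1) + deriv (deriv τ) s) • B s := by
    intro s hs
    have hev : iteratedDeriv 4 α =ᶠ[nhds s]
        fun t => ((εT * εN) * (τ t ^ 2 - 1)) • N t + deriv τ t • B t :=
      Filter.eventuallyEq_of_mem (hIopen.mem_nhds hs) d4
    have hg : HasDerivAt (fun t => (εT * εN) * (τ t ^ 2 - 1))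
        ((εT * εN) * (↑(2:ℕ) * τ s ^ (2-1) * deriv τ s)) s :=
      ((((hτdiff s).hasDerivAt.pow 2).sub_const 1).const_mul (εT * εN))
    have hd : HasDerivAt
        (fun t => ((εT * εN) * (τ t ^ 2 - 1)) • N t + deriv τ t • B t)
        ((((εT * εN) * (τ s ^ 2 - 1)) • ((-(εT * εN)) • T s + τ s • B s)
            + ((εT * εN) * (↑(2:ℕ) * τ s ^ (2-1) * deriv τ s)) • N s)
          + (deriv τ s • (((εT * εN) * τ s) • N s) + deriv (deriv τ) s • B s)) s :=
      (hg.smul (hNd s hs)).add ((hτ'diff s).hasDerivAt.smul (hBd s hs))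
    rw [show iteratedDeriv 5 α = deriv (iteratedDeriv 4 α) from iteratedDeriv_succ (n := 4), hev.deriv_eq, hd.deriv]
    funext i
    simp only [Pi.add_apply, Pi.smul_apply, smul_eq_mul]
    push_cast
    linear_combination (1 - τ s ^ 2) * T s i * hε2
  have key : ∀ s ∈ I,
      det3 (iteratedDeriv 3 α s) (iteratedDeriv 4 α s) (iteratedDeriv 5 α s)
        = (deriv (deriv τ) s * (1 - τ s ^ 2) + 3 * τ s * (deriv τ s) ^ 2)
            * det3 (T s) (N s) (B s) := by
    intro s hs
    rw [d3 s hs, d4 s hs, d5 s hs, det3_combo]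
    have hc : (-(εT * εN)) * ((εT * εN) * (τ s ^ 2 - 1))
          * ((εT * εN) * τ s * (τ s ^ 2 - 1) + deriv (deriv τ) s)
        - (-(εT * εN)) * deriv τ s * (3 * (εT * εN) * τ s * deriv τ s)
        - τ s * ((εT * εN) * (τ s ^ 2 - 1)) * (1 - τ s ^ 2)
        = deriv (deriv τ) s * (1 - τ s ^ 2) + 3 * τ s * deriv τ s ^ 2 := by
      linear_combination (-( (εT*εN) * τ s * (τ s ^ 2 - 1)^2
        + (τ s ^ 2 - 1) * deriv (deriv τ) s - 3 * τ s * (deriv τ s)^2)) * hε2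
    rw [hc]
  constructor
  · intro h s hs
    have h0 := h s hs
    rw [key s hs] at h0
    rcases mul_eq_zero.mp h0 with h1 | h1
    · exact h1
    · exact absurd h1 (hdet s hs)
  · intro h s hs
    rw [key s hs, h s hs, zero_mul]
end
end

section
/- Let I ⊆ ℝ be an open interval, let α : ℝ → ℝ³ be smooth, and let T, N, B : ℝ → ℝ³ and τ : ℝ → ℝ be smooth maps such that on I: α' = T, T' = N, N' = −ε_T ε_N T + τ B, B' = −ε_N ε_B τ N, where ε_T, ε_N, ε_B ∈ {−1, 1} are fixed signs with ε_T ε_B = 1, and suppose det(T(s), N(s), B(s)) ≠ 0 for all s ∈ I. Then det(α⁽³⁾(s), α⁽⁴⁾(s), α⁽⁵⁾(s)) = 0 for all s ∈ I if and only if τ''(s)·(1 + τ(s)²) − 3 τ(s) τ'(s)² = 0 for all s ∈ I. -/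
noncomputable section

lemma det3_lin (u v w : Fin 3 → ℝ) (a₁ b₁ c₁ a₂ b₂ c₂ a₃ b₃ c₃ : ℝ) :
    det3 (a₁ • u + b₁ • v + c₁ • w) (a₂ • u + b₂ • v + c₂ • w) (a₃ • u + b₃ • v + c₃ • w) =
    (a₁*(b₂*c₃ - c₂*b₃) - b₁*(a₂*c₃ - c₂*a₃) + c₁*(a₂*b₃ - b₂*a₃)) * det3 u v w := by
  simp [det3, Matrix.det_fin_three]
  ring

lemma deriv_congr_on {I : Set ℝ} (hI : IsOpen I) {f g : ℝ → (Fin 3 → ℝ)} {s : ℝ}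
    (hs : s ∈ I) (h : ∀ x ∈ I, f x = g x) : deriv f s = deriv g s :=
  Filter.EventuallyEq.deriv_eq (Filter.eventuallyEq_of_mem (hI.mem_nhds hs) h)

theorem stmt_2 (I : Set ℝ) (hIopen : IsOpen I) (hIconn : I.OrdConnected)
    (α T N B : ℝ → (Fin 3 → ℝ)) (τ : ℝ → ℝ)
    (hα : ContDiff ℝ (⊤ : ℕ∞) α) (hT : ContDiff ℝ (⊤ : ℕ∞) T)
    (hN : ContDiff ℝ (⊤ : ℕ∞) N) (hB : ContDiff ℝ (⊤ : ℕ∞) B)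
    (hτ : ContDiff ℝ (⊤ : ℕ∞) τ)
    (εT εN εB : ℝ)
    (hεT : εT = 1 ∨ εT = -1) (hεN : εN = 1 ∨ εN = -1) (hεB : εB = 1 ∨ εB = -1)
    (hεTB : εT * εB = 1)
    (hα' : ∀ s ∈ I, deriv α s = T s)
    (hT' : ∀ s ∈ I, deriv T s = N s)
    (hN' : ∀ s ∈ I, deriv N s = (-(εT * εN)) • T s + τ s • B s)
    (hB' : ∀ s ∈ I, deriv B s = (-(εN * εB * τ s)) • N s)
    (hdet : ∀ s ∈ I, det3 (T s) (N s) (B s) ≠ 0) :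
    (∀ s ∈ I,
        det3 (iteratedDeriv 3 α s) (iteratedDeriv 4 α s) (iteratedDeriv 5 α s) = 0) ↔
      (∀ s ∈ I,
        deriv (deriv τ) s * (1 + τ s ^ 2) - 3 * τ s * (deriv τ s) ^ 2 = 0) := by
  set ε := εT * εN with hεdef
  have hε2 : ε * ε = 1 := by rcases hεT with h1 | h1 <;> rcases hεN with h2 | h2 <;>
    simp [hεdef, h1, h2]
  have hNB : εN * εB = ε := by
    have hB2 : εB = εT := by rcases hεT with h1 | h1 <;> (rw [h1] at hεTB ⊢; linarith)
    rw [hB2, hεdef]; ring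
  rw [hNB] at hB'
  -- differentiability
  have hTd : Differentiable ℝ T := hT.differentiable (by simp)
  have hNd : Differentiable ℝ N := hN.differentiable (by simp)
  have hBd : Differentiable ℝ B := hB.differentiable (by simp)
  have hτd : Differentiable ℝ τ := hτ.differentiable (by simp)
  have hτ' : ContDiff ℝ (⊤ : ℕ∞) (deriv τ) := (contDiff_infty_iff_deriv.mp hτ).2
  have hτ'd : Differentiable ℝ (deriv τ) := hτ'.differentiable (by simp)
  -- iterated derivatives on I
  have h2 : ∀ s ∈ I, iteratedDeriv 2 α s = N s := by
    intro s hs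
    have : iteratedDeriv 2 α = deriv (deriv α) := by
      rw [iteratedDeriv_succ, iteratedDeriv_one]
    rw [this, deriv_congr_on hIopen hs hα', hT' s hs]
  have h3 : ∀ s ∈ I, iteratedDeriv 3 α s =
      (-ε) • T s + (0:ℝ) • N s + τ s • B s := by
    intro s hs
    rw [show iteratedDeriv 3 α = deriv (iteratedDeriv 2 α) from iteratedDeriv_succ,
      deriv_congr_on hIopen hs h2, hN' s hs]
    module
  have h4 : ∀ s ∈ I, iteratedDeriv 4 α s =
      (0:ℝ) • T s + (-(ε * (1 + τ s ^ 2))) • N s + deriv τ s • B s := by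
    intro s hs
    rw [show iteratedDeriv 4 α = deriv (iteratedDeriv 3 α) from iteratedDeriv_succ,
      deriv_congr_on hIopen hs h3]
    have hD : HasDerivAt (fun x => (-ε) • T x + (0:ℝ) • N x + τ x • B x)
        ((-ε) • deriv T s + (0:ℝ) • deriv N s +
          (τ s • deriv B s + deriv τ s • B s)) s :=
      (((hTd s).hasDerivAt.const_smul (-ε)).add
        ((hNd s).hasDerivAt.const_smul (0:ℝ))).add
        ((hτd s).hasDerivAt.smul (hBd s).hasDerivAt)
    rw [hD.deriv, hT' s hs, hB' s hs]
    module
  have h5 : ∀ s ∈ I, iteratedDeriv 5 α s =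
      (ε * ε * (1 + τ s ^ 2)) • T s + (-(3 * ε * τ s * deriv τ s)) • N s +
        (deriv (deriv τ) s - ε * τ s * (1 + τ s ^ 2)) • B s := by
    intro s hs
    rw [show iteratedDeriv 5 α = deriv (iteratedDeriv 4 α) from iteratedDeriv_succ,
      deriv_congr_on hIopen hs h4]
    have hc : HasDerivAt (fun x => -(ε * (1 + τ x ^ 2)))
        (-(ε * (2 * τ s * deriv τ s))) s := by
      have := ((((hτd s).hasDerivAt.pow 2).const_add 1).const_mul ε).neg
      exact this.congr_deriv (by norm_num)
    have hD : HasDerivAt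
        (fun x => (0:ℝ) • T x + (-(ε * (1 + τ x ^ 2))) • N x + deriv τ x • B x)
        ((0:ℝ) • deriv T s +
          ((-(ε * (1 + τ s ^ 2))) • deriv N s + (-(ε * (2 * τ s * deriv τ s))) • N s) +
          (deriv τ s • deriv B s + deriv (deriv τ) s • B s)) s :=
      (((hTd s).hasDerivAt.const_smul (0:ℝ)).add
        (hc.smul (hNd s).hasDerivAt)).add
        ((hτ'd s).hasDerivAt.smul (hBd s).hasDerivAt)
    rw [hD.deriv, hT' s hs, hN' s hs, hB' s hs]
    module
  -- the determinant identity
  have key : ∀ s ∈ I,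
      det3 (iteratedDeriv 3 α s) (iteratedDeriv 4 α s) (iteratedDeriv 5 α s) =
      (deriv (deriv τ) s * (1 + τ s ^ 2) - 3 * τ s * (deriv τ s) ^ 2) *
        det3 (T s) (N s) (B s) := by
    intro s hs
    rw [h3 s hs, h4 s hs, h5 s hs, det3_lin]
    have hε2' : ε ^ 2 = 1 := by rw [pow_two, hε2]
    linear_combination (((1 + τ s ^ 2) * deriv (deriv τ) s - 3 * τ s * (deriv τ s) ^ 2) *
      det3 (T s) (N s) (B s)) * hε2'
  constructor
  · intro h s hs
    have := key s hs
    rw [h s hs] at this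
    exact (mul_eq_zero.mp this.symm).resolve_right (hdet s hs)
  · intro h s hs
    rw [key s hs, h s hs, zero_mul]
end
end

section
/- Let I ⊆ ℝ be an open interval and let τ : ℝ → ℝ be smooth with τ''(s)·(1 + τ(s)²) − 3 τ(s) τ'(s)² = 0 for all s ∈ I. Then there exist real constants b, c such that (b·s + c)² < 1 for all s ∈ I and τ(s) = (b·s + c) / √(1 − (b·s + c)²) for all s ∈ I. -/
noncomputable section

section aux

variable (τ : ℝ → ℝ)

lemma q_pos (s : ℝ) : (0:ℝ) < 1 + τ s ^ 2 := by positivity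

lemma sq_sqrt_q (s : ℝ) : (Real.sqrt (1 + τ s ^ 2)) ^ 2 = 1 + τ s ^ 2 :=
  Real.sq_sqrt (le_of_lt (q_pos τ s))

lemma sqrt_q_pos (s : ℝ) : 0 < Real.sqrt (1 + τ s ^ 2) :=
  Real.sqrt_pos.mpr (q_pos τ s)

variable (hτ : ContDiff ℝ (⊤ : ℕ∞) τ)
include hτ

lemma hasDerivAt_sqrt_q (s : ℝ) :
    HasDerivAt (fun x => Real.sqrt (1 + τ x ^ 2))
      (τ s * deriv τ s / Real.sqrt (1 + τ s ^ 2)) s := by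
  have hτd : HasDerivAt τ (deriv τ s) s :=
    (hτ.differentiable (by simp) s).hasDerivAt
  have h1 : HasDerivAt (fun x => 1 + τ x ^ 2) (2 * τ s * deriv τ s) s := by
    have := ((hτd.pow 2).const_add 1)
    simpa [mul_comm, mul_assoc, mul_left_comm] using this
  have h2 := (Real.hasDerivAt_sqrt (ne_of_gt (q_pos τ s))).comp s h1
  refine h2.congr_deriv (Eq.symm ?_)
  have hne := ne_of_gt (sqrt_q_pos τ s)
  field_simp

lemma hasDerivAt_g (s : ℝ) :
    HasDerivAt (fun x => τ x / Real.sqrt (1 + τ x ^ 2))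
      (deriv τ s / (Real.sqrt (1 + τ s ^ 2)) ^ 3) s := by
  have hτd : HasDerivAt τ (deriv τ s) s :=
    (hτ.differentiable (by simp) s).hasDerivAt
  have h2 := hτd.div (hasDerivAt_sqrt_q τ hτ s) (ne_of_gt (sqrt_q_pos τ s))
  refine h2.congr_deriv (Eq.symm ?_)
  have hne := ne_of_gt (sqrt_q_pos τ s)
  have hsq := sq_sqrt_q τ s
  set t := τ s; set d := deriv τ s; set r := Real.sqrt (1 + t ^ 2)
  field_simp
  linear_combination (d * r * (1 + t^2) - d*r*(r^2+1) - d*r*t^2 + d*r^3 - d) * hsq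

lemma hasDerivAt_G (s : ℝ) :
    HasDerivAt (fun x => deriv τ x / (Real.sqrt (1 + τ x ^ 2)) ^ 3)
      ((deriv (deriv τ) s * (1 + τ s ^ 2) - 3 * τ s * (deriv τ s) ^ 2)
        / (Real.sqrt (1 + τ s ^ 2)) ^ 5) s := by
  have hτ' : ContDiff ℝ (⊤ : ℕ∞) (deriv τ) := (contDiff_infty_iff_deriv.mp hτ).2
  have hd2 : HasDerivAt (deriv τ) (deriv (deriv τ) s) s :=
    (hτ'.differentiable (by simp) s).hasDerivAt
  have hden : HasDerivAt (fun x => (Real.sqrt (1 + τ x ^ 2)) ^ 3)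
      (3 * (Real.sqrt (1 + τ s ^ 2)) ^ 2 * (τ s * deriv τ s / Real.sqrt (1 + τ s ^ 2))) s := by
    have h := (hasDerivAt_sqrt_q τ hτ s).pow 3
    exact h.congr_deriv (by norm_num)
  have h2 := hd2.div hden (by positivity)
  refine h2.congr_deriv (Eq.symm ?_)
  have hne : Real.sqrt (1 + τ s ^ 2) ≠ 0 := ne_of_gt (sqrt_q_pos τ s)
  have hsq := sq_sqrt_q τ s
  set t := τ s; set d := deriv τ s; set e := deriv (deriv τ) s
  set r := Real.sqrt (1 + t ^ 2)
  have h3 : r ^ 3 = (1 + t ^ 2) * r := by rw [show r^3 = r^2*r by ring, hsq]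
  have h5 : r ^ 5 = (1 + t ^ 2) ^ 2 * r := by rw [show r^5 = (r^2)^2*r by ring, hsq]
  rw [h3, h5, hsq]
  field_simp
  linear_combination
    (-(r*(1+t^2)*(e*(1+t^2)+3*t^3*d^2)) + r*(1+t^2)*(e*(1+t^2)-3*t*d^2) + 3*t*d^2*((1+t^2)^2*r - 1)) * hsq

end aux

theorem stmt_5 (I : Set ℝ) (hIopen : IsOpen I) (hIconn : I.OrdConnected)
    (τ : ℝ → ℝ) (hτ : ContDiff ℝ (⊤ : ℕ∞) τ)
    (hode : ∀ s ∈ I,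
      deriv (deriv τ) s * (1 + τ s ^ 2) - 3 * τ s * (deriv τ s) ^ 2 = 0) :
    ∃ b c : ℝ, (∀ s ∈ I, (b * s + c) ^ 2 < 1) ∧
      ∀ s ∈ I, τ s = (b * s + c) / Real.sqrt (1 - (b * s + c) ^ 2) := by
  rcases I.eq_empty_or_nonempty with hI | ⟨s₀, hs₀⟩
  · exact ⟨0, 0, by simp [hI], by simp [hI]⟩
  have hconv : Convex ℝ I := convex_iff_ordConnected.mpr hIconn
  set g : ℝ → ℝ := fun x => τ x / Real.sqrt (1 + τ x ^ 2) with hg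
  set G : ℝ → ℝ := fun x => deriv τ x / (Real.sqrt (1 + τ x ^ 2)) ^ 3 with hG
  -- G is constant on I
  have hGc : ∀ s ∈ I, G s = G s₀ := by
    intro s hs
    refine Convex.is_const_of_fderivWithin_eq_zero (𝕜 := ℝ) hconv (f := G) ?_ ?_ hs hs₀
    · exact fun x _ => ((hasDerivAt_G τ hτ x).differentiableAt).differentiableWithinAt
    · intro x hx
      have h0 : HasDerivAt G 0 x := by
        have h := hasDerivAt_G τ hτ x
        rwa [hode x hx, zero_div] at h
      have h1 : HasFDerivAt G (0 : ℝ →L[ℝ] ℝ) x := by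
        have h2 := h0.hasFDerivAt
        rwa [show (ContinuousLinearMap.toSpanSingleton ℝ (0:ℝ)) = 0 by
          ext; simp] at h2
      rw [fderivWithin_of_isOpen hIopen hx]
      exact h1.fderiv
  set b : ℝ := G s₀ with hb
  set c : ℝ := g s₀ - b * s₀ with hc
  have hgl : ∀ s ∈ I, g s = b * s + c := by
    intro s hs
    have key : g s - b * s = g s₀ - b * s₀ := by
      refine Convex.is_const_of_fderivWithin_eq_zero (𝕜 := ℝ) hconv (f := fun x => g x - b * x) ?_ ?_ hs hs₀
      · exact fun x _ =>
          (((hasDerivAt_g τ hτ x).sub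
            ((hasDerivAt_id x).const_mul b)).differentiableAt).differentiableWithinAt
      · intro x hx
        have h0 : HasDerivAt (fun y => g y - b * y) 0 x := by
          have h := (hasDerivAt_g τ hτ x).sub ((hasDerivAt_id x).const_mul b)
          have hx0 : G x - b * 1 = 0 := by rw [hGc x hx]; ring
          rw [← hx0]
          exact h
        have h1 : HasFDerivAt (fun y => g y - b * y) (0 : ℝ →L[ℝ] ℝ) x := by
          have h2 := h0.hasFDerivAt
          rwa [show (ContinuousLinearMap.toSpanSingleton ℝ (0:ℝ)) = 0 by
            ext; simp] at h2
        rw [fderivWithin_of_isOpen hIopen hx]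
        exact h1.fderiv
    rw [hc]; linarith
  refine ⟨b, c, ?_, ?_⟩
  · intro s hs
    rw [← hgl s hs]
    have hsq := sq_sqrt_q τ s
    have hpos := q_pos τ s
    have h2 : g s ^ 2 = τ s ^ 2 / (1 + τ s ^ 2) := by
      rw [hg]; simp only; rw [div_pow, hsq]
    rw [h2, div_lt_one hpos]
    linarith
  · intro s hs
    rw [← hgl s hs]
    have hsq := sq_sqrt_q τ s
    have hpos := q_pos τ s
    have hne := ne_of_gt (sqrt_q_pos τ s)
    have h1 : 1 - g s ^ 2 = 1 / (1 + τ s ^ 2) := by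
      rw [hg]; simp only; rw [div_pow, hsq]; field_simp; ring
    rw [h1, one_div, Real.sqrt_inv, hg]
    simp only
    rw [div_inv_eq_mul, div_mul_cancel₀ _ hne]

end
end

section
/- Let I ⊆ ℝ be an open interval and let τ : ℝ → ℝ be smooth with τ(s)² < 1 for all s ∈ I and τ''(s)·(1 − τ(s)²) + 3 τ(s) τ'(s)² = 0 for all s ∈ I. Then there exist real constants b, c such that τ(s) = (b·s + c) / √(1 + (b·s + c)²) for all s ∈ I. -/
noncomputable section

theorem const_on_aux (I : Set ℝ) (hIopen : IsOpen I) (hconv : Convex ℝ I)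
    (f : ℝ → ℝ) (hd : ∀ x ∈ I, HasDerivAt f 0 x) {x y : ℝ} (hx : x ∈ I) (hy : y ∈ I) :
    f x = f y := by
  refine hconv.is_const_of_fderivWithin_eq_zero
    (fun z hz => (hd z hz).differentiableAt.differentiableWithinAt) (fun z hz => ?_) hx hy
  rw [fderivWithin_of_isOpen hIopen hz, (hd z hz).hasFDerivAt.fderiv]
  ext; simp

theorem stmt_6 (I : Set ℝ) (hIopen : IsOpen I) (hIconn : I.OrdConnected)
    (τ : ℝ → ℝ) (hτ : ContDiff ℝ (⊤ : ℕ∞) τ)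
    (hτ1 : ∀ s ∈ I, τ s ^ 2 < 1)
    (hode : ∀ s ∈ I,
      deriv (deriv τ) s * (1 - τ s ^ 2) + 3 * τ s * (deriv τ s) ^ 2 = 0) :
    ∃ b c : ℝ, ∀ s ∈ I, τ s = (b * s + c) / Real.sqrt (1 + (b * s + c) ^ 2) := by
  rcases Set.eq_empty_or_nonempty I with hI | ⟨s0, hs0⟩
  · exact ⟨0, 0, by simp [hI]⟩
  have hconv : Convex ℝ I := hIconn.convex
  have hpos : ∀ s ∈ I, 0 < 1 - τ s ^ 2 := fun s hs => by linarith [hτ1 s hs]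
  have hτd : ∀ s : ℝ, HasDerivAt τ (deriv τ s) s :=
    fun s => (hτ.differentiable (by simp) s).hasDerivAt
  have hτ' : ContDiff ℝ (⊤ : ℕ∞) (deriv τ) := (contDiff_infty_iff_deriv.mp hτ).2
  have hτ'd : ∀ s : ℝ, HasDerivAt (deriv τ) (deriv (deriv τ) s) s :=
    fun s => (hτ'.differentiable (by simp) s).hasDerivAt
  set g : ℝ → ℝ := fun s => τ s / Real.sqrt (1 - τ s ^ 2) with hgdef
  set h : ℝ → ℝ := fun s => deriv τ s / ((1 - τ s ^ 2) * Real.sqrt (1 - τ s ^ 2)) with hhdef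
  -- derivative of A = 1 - τ^2
  have hA : ∀ s : ℝ, HasDerivAt (fun s => 1 - τ s ^ 2)
      (-(2 * τ s * deriv τ s)) s := by
    intro s
    have := (hasDerivAt_const s (1:ℝ)).sub ((hτd s).pow 2)
    exact this.congr_deriv (by ring)
  -- derivative of sqrt A
  have hsq : ∀ s ∈ I, HasDerivAt (fun s => Real.sqrt (1 - τ s ^ 2))
      (-(2 * τ s * deriv τ s) / (2 * Real.sqrt (1 - τ s ^ 2))) s :=
    fun s hs => (hA s).sqrt (ne_of_gt (hpos s hs))
  have sqpos : ∀ s ∈ I, 0 < Real.sqrt (1 - τ s ^ 2) :=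
    fun s hs => Real.sqrt_pos.mpr (hpos s hs)
  have sqsq : ∀ s ∈ I, Real.sqrt (1 - τ s ^ 2) ^ 2 = 1 - τ s ^ 2 :=
    fun s hs => Real.sq_sqrt (le_of_lt (hpos s hs))
  -- g' = h on I
  have hgd : ∀ s ∈ I, HasDerivAt g (h s) s := by
    intro s hs
    have hd := (hτd s).div (hsq s hs) (ne_of_gt (sqpos s hs))
    refine hd.congr_deriv ?_
    have h1 := sqsq s hs
    have h2 := sqpos s hs
    have h3 := hpos s hs
    simp only [hhdef]
    field_simp
    linear_combination (-(deriv τ s * τ s ^ 2)) * h1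
  -- h' = 0 on I
  have hhd : ∀ s ∈ I, HasDerivAt h 0 s := by
    intro s hs
    have hD : HasDerivAt (fun s => (1 - τ s ^ 2) * Real.sqrt (1 - τ s ^ 2))
        ((-(2 * τ s * deriv τ s)) * Real.sqrt (1 - τ s ^ 2)
          + (1 - τ s ^ 2) * (-(2 * τ s * deriv τ s) / (2 * Real.sqrt (1 - τ s ^ 2)))) s :=
      (hA s).mul (hsq s hs)
    have hDne : (1 - τ s ^ 2) * Real.sqrt (1 - τ s ^ 2) ≠ 0 :=
      ne_of_gt (mul_pos (hpos s hs) (sqpos s hs))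
    have hd := (hτ'd s).div hD hDne
    refine hd.congr_deriv ?_
    have h1 := sqsq s hs
    have h2 := sqpos s hs
    have h3 := hpos s hs
    have h4 := hode s hs
    field_simp
    linear_combination (deriv (deriv τ) s * (1 - τ s ^ 2) + 2 * τ s * deriv τ s ^ 2) * h1
      + (1 - τ s ^ 2) * h4
  -- h is constant b on I
  set b := h s0 with hb
  have hhb : ∀ s ∈ I, h s = b := fun s hs => const_on_aux I hIopen hconv h hhd hs hs0
  -- g - b * id has derivative 0
  set G : ℝ → ℝ := fun s => g s - b * s with hGdef
  have hGd : ∀ s ∈ I, HasDerivAt G 0 s := by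
    intro s hs
    have := (hgd s hs).sub ((hasDerivAt_id s).const_mul b)
    simp [hhb s hs] at this
    exact this
  set c := g s0 - b * s0 with hc
  have hgl : ∀ s ∈ I, g s = b * s + c := by
    intro s hs
    have := const_on_aux I hIopen hconv G hGd hs hs0
    simp only [hGdef, hc] at this ⊢
    linarith
  refine ⟨b, c, fun s hs => ?_⟩
  -- invert: τ = g / sqrt (1 + g^2)
  have h1 := sqsq s hs
  have h2 := sqpos s hs
  have h3 := hpos s hs
  have key : 1 + g s ^ 2 = 1 / (1 - τ s ^ 2) := by
    simp only [hgdef]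
    rw [div_pow, h1]
    field_simp
    ring
  rw [← hgl s hs, key, one_div, Real.sqrt_inv, div_inv_eq_mul]
  simp only [hgdef]
  rw [div_mul_cancel₀ _ (ne_of_gt h2)]
end
end

section
/- Let I ⊆ ℝ be an open interval and let τ : ℝ → ℝ be smooth with τ(s)² > 1 for all s ∈ I and τ''(s)·(1 − τ(s)²) + 3 τ(s) τ'(s)² = 0 for all s ∈ I. Then there exist real constants b, c such that (b·s + c)² > 1 for all s ∈ I and τ(s) = (b·s + c) / √((b·s + c)² − 1) for all s ∈ I. -/
noncomputable section

private lemma const_of_deriv_zero {I : Set ℝ} (hIopen : IsOpen I) (hconv : Convex ℝ I)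
    {f : ℝ → ℝ} (h : ∀ x ∈ I, HasDerivAt f 0 x) {x y : ℝ} (hx : x ∈ I) (hy : y ∈ I) :
    f x = f y := by
  apply hconv.is_const_of_fderivWithin_eq_zero
    (fun z hz => ((h z hz).differentiableAt).differentiableWithinAt) _ hx hy
  intro z hz
  rw [fderivWithin_of_isOpen hIopen hz, (h z hz).hasFDerivAt.fderiv]
  ext v
  simp

theorem stmt_7 (I : Set ℝ) (hIopen : IsOpen I) (hIconn : I.OrdConnected)
    (τ : ℝ → ℝ) (hτ : ContDiff ℝ (⊤ : ℕ∞) τ)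
    (hτ1 : ∀ s ∈ I, τ s ^ 2 > 1)
    (hode : ∀ s ∈ I,
      deriv (deriv τ) s * (1 - τ s ^ 2) + 3 * τ s * (deriv τ s) ^ 2 = 0) :
    ∃ b c : ℝ, (∀ s ∈ I, (b * s + c) ^ 2 > 1) ∧
      ∀ s ∈ I, τ s = (b * s + c) / Real.sqrt ((b * s + c) ^ 2 - 1) := by
  rcases I.eq_empty_or_nonempty with hI | ⟨s₀, hs₀⟩
  · exact ⟨0, 0, by simp [hI], by simp [hI]⟩
  have hconv : Convex ℝ I := convex_iff_ordConnected.mpr hIconn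
  have hd1 : Differentiable ℝ τ := hτ.differentiable (by simp)
  have hd2 : Differentiable ℝ (deriv τ) :=
    ((contDiff_infty_iff_deriv.mp hτ).2).differentiable (by simp)
  set g : ℝ → ℝ := fun x => τ x / Real.sqrt (τ x ^ 2 - 1) with hg_def
  set G : ℝ → ℝ := fun x => -(deriv τ x) / (Real.sqrt (τ x ^ 2 - 1)) ^ 3 with hG_def
  -- basic facts at points of I
  have hfacts : ∀ s ∈ I, 0 < Real.sqrt (τ s ^ 2 - 1) ∧
      (Real.sqrt (τ s ^ 2 - 1)) ^ 2 = τ s ^ 2 - 1 := by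
    intro s hs
    have h1 : (0:ℝ) < τ s ^ 2 - 1 := by linarith [hτ1 s hs]
    exact ⟨Real.sqrt_pos.mpr h1, Real.sq_sqrt h1.le⟩
  have hSd : ∀ s ∈ I, HasDerivAt (fun x => Real.sqrt (τ x ^ 2 - 1))
      (τ s * deriv τ s / Real.sqrt (τ s ^ 2 - 1)) s := by
    intro s hs
    obtain ⟨hS, hS2⟩ := hfacts s hs
    have h1 : HasDerivAt (fun x => τ x ^ 2 - 1) (2 * τ s ^ 1 * deriv τ s) s :=
      ((hd1 s).hasDerivAt.pow 2).sub_const 1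
    have h2 := h1.sqrt (by nlinarith [hτ1 s hs])
    convert h2 using 1
    field_simp
  have hgd : ∀ s ∈ I, HasDerivAt g (G s) s := by
    intro s hs
    obtain ⟨hS, hS2⟩ := hfacts s hs
    have h2 := (hd1 s).hasDerivAt.div (hSd s hs) hS.ne'
    have h3 : deriv τ s * Real.sqrt (τ s ^ 2 - 1)
        - τ s * (τ s * deriv τ s / Real.sqrt (τ s ^ 2 - 1))
        = -deriv τ s / Real.sqrt (τ s ^ 2 - 1) := by
      field_simp
      linear_combination (deriv τ s) * hS2
    rw [h3] at h2
    refine h2.congr_deriv (Eq.symm ?_)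
    show -(deriv τ s) / (Real.sqrt (τ s ^ 2 - 1)) ^ 3 = _
    rw [div_div]
    ring_nf
  have hGd : ∀ s ∈ I, HasDerivAt G 0 s := by
    intro s hs
    obtain ⟨hS, hS2⟩ := hfacts s hs
    have hnum : HasDerivAt (fun x => -(deriv τ x)) (-(deriv (deriv τ) s)) s :=
      ((hd2 s).hasDerivAt).neg
    have hden : HasDerivAt (fun x => (Real.sqrt (τ x ^ 2 - 1)) ^ 3)
        (3 * (Real.sqrt (τ s ^ 2 - 1)) ^ 2 * (τ s * deriv τ s / Real.sqrt (τ s ^ 2 - 1))) s := by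
      have := (hSd s hs).pow 3
      refine this.congr_deriv ?_
      norm_num
    have h2 := hnum.div hden (pow_ne_zero 3 hS.ne')
    have hode' := hode s hs
    have h3 : 3 * (Real.sqrt (τ s ^ 2 - 1)) ^ 2 * (τ s * deriv τ s / Real.sqrt (τ s ^ 2 - 1))
        = 3 * Real.sqrt (τ s ^ 2 - 1) * (τ s * deriv τ s) := by
      field_simp
    rw [h3] at h2
    refine h2.congr_deriv (Eq.symm ?_)
    rw [eq_comm, div_eq_zero_iff]
    left
    linear_combination (Real.sqrt (τ s ^ 2 - 1)) * hode'
      + (-(deriv (deriv τ) s) * Real.sqrt (τ s ^ 2 - 1)) * hS2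
  set b : ℝ := G s₀ with hb_def
  have hGconst : ∀ s ∈ I, G s = b := fun s hs =>
    const_of_deriv_zero hIopen hconv hGd hs hs₀
  set c : ℝ := g s₀ - b * s₀ with hc_def
  have hglin : ∀ s ∈ I, g s = b * s + c := by
    intro s hs
    have h : ∀ x ∈ I, HasDerivAt (fun y => g y - b * y) 0 x := by
      intro x hx
      have := (hgd x hx).sub ((hasDerivAt_id x).const_mul b)
      rw [hGconst x hx] at this
      simp at this
      exact this
    have := const_of_deriv_zero hIopen hconv h hs hs₀
    simp only [hc_def]
    linarith [this]
  refine ⟨b, c, ?_, ?_⟩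
  · intro s hs
    obtain ⟨hS, hS2⟩ := hfacts s hs
    rw [← hglin s hs]
    have : g s ^ 2 = τ s ^ 2 / (τ s ^ 2 - 1) := by
      simp only [hg_def, div_pow, hS2]
    rw [this]
    rw [gt_iff_lt, lt_div_iff₀ (by linarith [hτ1 s hs])]
    linarith [hτ1 s hs]
  · intro s hs
    obtain ⟨hS, hS2⟩ := hfacts s hs
    rw [← hglin s hs]
    have hne : τ s ^ 2 - 1 ≠ 0 := by nlinarith [hτ1 s hs]
    have h1 : g s ^ 2 - 1 = 1 / (τ s ^ 2 - 1) := by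
      have h0 : g s ^ 2 = τ s ^ 2 / (τ s ^ 2 - 1) := by
        simp only [hg_def, div_pow, hS2]
      rw [h0, div_sub_one hne]
      congr 1
      ring
    rw [h1]
    have h2 : Real.sqrt (1 / (τ s ^ 2 - 1)) = 1 / Real.sqrt (τ s ^ 2 - 1) := by
      rw [one_div, Real.sqrt_inv, one_div]
    rw [h2, hg_def]
    field_simp
end
end

section
/- Let b, c ∈ ℝ and define τ(s) = (b·s + c) / √(1 − (b·s + c)²). Then at every s ∈ ℝ with (b·s + c)² < 1, the function τ satisfies τ''(s)·(1 + τ(s)²) − 3 τ(s) τ'(s)² = 0. -/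
noncomputable section

private lemma alg1 (b u w : ℝ) (hw2 : w ^ 2 = 1 - u ^ 2) :
    b / w ^ 3 = (b * w - u * (-(2 * u * b) / (2 * w))) / w ^ 2 := by
  rcases eq_or_ne w 0 with h | h
  · simp [h]
  · field_simp
    ring_nf
    linear_combination (-b) * hw2

private lemma alg2 (b u w : ℝ) :
    3 * b ^ 2 * u / w ^ 5 = (0 * w ^ 3 - b * (3 * w ^ 2 * (-(2 * u * b) / (2 * w)))) / (w ^ 3) ^ 2 := by
  rcases eq_or_ne w 0 with h | h
  · simp [h]
  · field_simp
    ring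

private lemma alg3 (b u w : ℝ) (hw : w ≠ 0) (hw2 : w ^ 2 = 1 - u ^ 2) :
    3 * b ^ 2 * u / w ^ 5 * (1 + (u / w) ^ 2) - 3 * (u / w) * (b / w ^ 3) ^ 2 = 0 := by
  field_simp
  ring_nf
  linear_combination (3*b^2*u) * hw2

private lemma aux_hasDeriv (b c : ℝ) (s : ℝ) (hs : (b * s + c) ^ 2 < 1) :
    HasDerivAt (fun s => (b * s + c) / Real.sqrt (1 - (b * s + c) ^ 2))
      (b / (Real.sqrt (1 - (b * s + c) ^ 2)) ^ 3) s := by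
  set u : ℝ := b * s + c with hu
  have h1 : (0:ℝ) < 1 - u ^ 2 := by linarith
  have hw : 0 < Real.sqrt (1 - u ^ 2) := Real.sqrt_pos.mpr h1
  have hw2 : Real.sqrt (1 - u ^ 2) ^ 2 = 1 - u ^ 2 := Real.sq_sqrt h1.le
  have hlin : HasDerivAt (fun s : ℝ => b * s + c) b s := by
    simpa using ((hasDerivAt_id s).const_mul b).add_const c
  have hin : HasDerivAt (fun s : ℝ => 1 - (b * s + c) ^ 2) (-(2 * u * b)) s := by
    simpa [mul_comm, mul_assoc] using ((hlin.pow 2).const_sub 1)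
  have hsq : HasDerivAt (fun s : ℝ => Real.sqrt (1 - (b * s + c) ^ 2))
      (-(2 * u * b) / (2 * Real.sqrt (1 - u ^ 2))) s := hin.sqrt h1.ne'
  have := hlin.div hsq hw.ne'
  exact this.congr_deriv (alg1 b u _ hw2).symm

theorem stmt_8 (b c : ℝ)
    (τ : ℝ → ℝ)
    (hτdef : τ = fun s => (b * s + c) / Real.sqrt (1 - (b * s + c) ^ 2)) :
    ∀ s : ℝ, (b * s + c) ^ 2 < 1 →
      deriv (deriv τ) s * (1 + τ s ^ 2) - 3 * τ s * (deriv τ s) ^ 2 = 0 := by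
  intro s hs
  set u : ℝ := b * s + c with hu
  have h1 : (0:ℝ) < 1 - u ^ 2 := by linarith
  have hw : 0 < Real.sqrt (1 - u ^ 2) := Real.sqrt_pos.mpr h1
  have hw2 : Real.sqrt (1 - u ^ 2) ^ 2 = 1 - u ^ 2 := Real.sq_sqrt h1.le
  have hopen : IsOpen {x : ℝ | (b * x + c) ^ 2 < 1} := by
    have : Continuous fun x : ℝ => (b * x + c) ^ 2 := by continuity
    exact isOpen_lt this continuous_const
  have hmem : {x : ℝ | (b * x + c) ^ 2 < 1} ∈ nhds s := hopen.mem_nhds hs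
  have hderiv_eq : deriv τ =ᶠ[nhds s]
      (fun x => b / (Real.sqrt (1 - (b * x + c) ^ 2)) ^ 3) := by
    filter_upwards [hmem] with x hx
    rw [hτdef]
    exact (aux_hasDeriv b c x hx).deriv
  have hτ1 : deriv τ s = b / (Real.sqrt (1 - u ^ 2)) ^ 3 := by
    rw [hτdef]; exact (aux_hasDeriv b c s hs).deriv
  have hg : HasDerivAt (fun x => b / (Real.sqrt (1 - (b * x + c) ^ 2)) ^ 3)
      (3 * b ^ 2 * u / (Real.sqrt (1 - u ^ 2)) ^ 5) s := by
    have hlin : HasDerivAt (fun x : ℝ => b * x + c) b s := by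
      simpa using ((hasDerivAt_id s).const_mul b).add_const c
    have hin : HasDerivAt (fun x : ℝ => 1 - (b * x + c) ^ 2) (-(2 * u * b)) s := by
      simpa [mul_comm, mul_assoc] using ((hlin.pow 2).const_sub 1)
    have hsq : HasDerivAt (fun x : ℝ => Real.sqrt (1 - (b * x + c) ^ 2))
        (-(2 * u * b) / (2 * Real.sqrt (1 - u ^ 2))) s := hin.sqrt h1.ne'
    have hcube : HasDerivAt (fun x : ℝ => (Real.sqrt (1 - (b * x + c) ^ 2)) ^ 3)
        (3 * (Real.sqrt (1 - u ^ 2)) ^ 2 * (-(2 * u * b) / (2 * Real.sqrt (1 - u ^ 2)))) s := by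
      simpa [mul_comm, mul_assoc, ← hu] using hsq.fun_pow 3
    have hcube_ne : (Real.sqrt (1 - u ^ 2)) ^ 3 ≠ 0 := pow_ne_zero _ hw.ne'
    have := (hasDerivAt_const s b).div hcube hcube_ne
    exact this.congr_deriv (alg2 b u _).symm
  have hτ2 : deriv (deriv τ) s = 3 * b ^ 2 * u / (Real.sqrt (1 - u ^ 2)) ^ 5 := by
    rw [Filter.EventuallyEq.deriv_eq hderiv_eq]
    exact hg.deriv
  have hτs : τ s = u / Real.sqrt (1 - u ^ 2) := by rw [hτdef]
  rw [hτ2, hτ1, hτs]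
  exact alg3 b u _ hw.ne' hw2
end
end

section
/- Let b, c ∈ ℝ and define τ(s) = (b·s + c) / √((b·s + c)² − 1). Then at every s ∈ ℝ with (b·s + c)² > 1, the function τ satisfies τ''(s)·(1 − τ(s)²) + 3 τ(s) τ'(s)² = 0. -/
noncomputable section

private lemma aux1 (u bb r : ℝ) (hr : r ≠ 0) (h : r ^ 2 = u ^ 2 - 1) :
    -bb / ((u ^ 2 - 1) * r) = (bb * r - u * (2 * u * bb / (2 * r))) / r ^ 2 := by
  rw [← h]; field_simp; linear_combination (-bb) * h

private lemma aux2 (u bb r : ℝ) (hr : r ≠ 0) (h : r ^ 2 = u ^ 2 - 1) :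
    ((0 * ((u ^ 2 - 1) * r) - (-bb) * (2 * u * bb * r + (u ^ 2 - 1) * (2 * u * bb / (2 * r))))
        / ((u ^ 2 - 1) * r) ^ 2)
      * (1 - (u / r) ^ 2) + 3 * (u / r) * (-bb / ((u ^ 2 - 1) * r)) ^ 2 = 0 := by
  rw [← h]; field_simp; linear_combination 3 * bb ^ 2 * u * h

theorem stmt_10 (b c : ℝ)
    (τ : ℝ → ℝ)
    (hτdef : τ = fun s => (b * s + c) / Real.sqrt ((b * s + c) ^ 2 - 1)) :
    ∀ s : ℝ, (b * s + c) ^ 2 > 1 →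
      deriv (deriv τ) s * (1 - τ s ^ 2) + 3 * τ s * (deriv τ s) ^ 2 = 0 := by
  intro s hs
  set g : ℝ → ℝ := fun t => (b * t + c) ^ 2 - 1 with hgdef
  set D : ℝ → ℝ := fun t => -b / (g t * Real.sqrt (g t)) with hDdef
  have hopen : IsOpen {t : ℝ | 0 < g t} := isOpen_lt continuous_const (by fun_prop)
  have hmem : s ∈ {t : ℝ | 0 < g t} := by
    show (0 : ℝ) < (b * s + c) ^ 2 - 1; linarith
  have hnbhd : {t : ℝ | 0 < g t} ∈ nhds s := hopen.mem_nhds hmem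
  -- first derivative
  have key : ∀ t, 0 < g t → HasDerivAt τ (D t) t := by
    intro t ht
    have hsne : Real.sqrt (g t) ≠ 0 := ne_of_gt (Real.sqrt_pos.mpr ht)
    have hsq : Real.sqrt (g t) ^ 2 = g t := Real.sq_sqrt ht.le
    have hu : HasDerivAt (fun t : ℝ => b * t + c) b t := by
      simpa using ((hasDerivAt_id t).const_mul b).add_const c
    have hg : HasDerivAt g (2 * (b * t + c) * b) t := by
      have := (hu.pow 2).sub_const 1
      simpa [hgdef, mul_comm, mul_assoc, mul_left_comm] using this
    have hsqrt : HasDerivAt (fun t => Real.sqrt (g t))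
        (2 * (b * t + c) * b / (2 * Real.sqrt (g t))) t := hg.sqrt (ne_of_gt ht)
    have hdiv := hu.div hsqrt hsne
    rw [hτdef]
    exact hdiv.congr_deriv (aux1 (b * t + c) b (Real.sqrt (g t)) hsne hsq).symm
  have hEq : deriv τ =ᶠ[nhds s] D := by
    filter_upwards [hnbhd] with t ht
    exact (key t ht).deriv
  have hderiv1 : deriv τ s = D s := (key s hmem).deriv
  -- second derivative
  have hsne : Real.sqrt (g s) ≠ 0 := ne_of_gt (Real.sqrt_pos.mpr hmem)
  have hsq : Real.sqrt (g s) ^ 2 = g s := Real.sq_sqrt hmem.le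
  have hgne : g s ≠ 0 := ne_of_gt hmem
  have hu : HasDerivAt (fun t : ℝ => b * t + c) b s := by
    simpa using ((hasDerivAt_id s).const_mul b).add_const c
  have hg : HasDerivAt g (2 * (b * s + c) * b) s := by
    have := (hu.pow 2).sub_const 1
    simpa [hgdef, mul_comm, mul_assoc, mul_left_comm] using this
  have hsqrt : HasDerivAt (fun t => Real.sqrt (g t))
      (2 * (b * s + c) * b / (2 * Real.sqrt (g s))) s := hg.sqrt (ne_of_gt hmem)
  have hden : HasDerivAt (fun t => g t * Real.sqrt (g t))
      (2 * (b * s + c) * b * Real.sqrt (g s)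
        + g s * (2 * (b * s + c) * b / (2 * Real.sqrt (g s)))) s := hg.mul hsqrt
  have hdenne : g s * Real.sqrt (g s) ≠ 0 := mul_ne_zero hgne hsne
  have hD : HasDerivAt D
      ((0 * (g s * Real.sqrt (g s)) - (-b) *
        (2 * (b * s + c) * b * Real.sqrt (g s)
          + g s * (2 * (b * s + c) * b / (2 * Real.sqrt (g s)))))
        / (g s * Real.sqrt (g s)) ^ 2) s :=
    (hasDerivAt_const s (-b)).div hden hdenne
  have hderiv2 : deriv (deriv τ) s = deriv D s := hEq.deriv_eq
  rw [hderiv2, hD.deriv, hderiv1, hτdef]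
  simp only [hDdef]
  exact aux2 (b * s + c) b (Real.sqrt (g s)) hsne hsq
end
end

section
/- Let I ⊆ ℝ be an open interval, let α : ℝ → ℝ³ be smooth, and let T, N, B : ℝ → ℝ³ and τ : ℝ → ℝ be smooth maps such that on I: α' = T, T' = N, N' = τ T − B, and B' = −τ N. Then for every s ∈ I, det(α⁽³⁾(s), α⁽⁴⁾(s), α⁽⁵⁾(s)) = det(T(s), N(s), B(s)) · ( 2 τ(s) τ''(s) − 3 τ'(s)² ). -/
noncomputable section

theorem stmt_11 (I : Set ℝ) (hIopen : IsOpen I) (hIconn : I.OrdConnected)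
    (α T N B : ℝ → (Fin 3 → ℝ)) (τ : ℝ → ℝ)
    (hα : ContDiff ℝ (⊤ : ℕ∞) α) (hT : ContDiff ℝ (⊤ : ℕ∞) T)
    (hN : ContDiff ℝ (⊤ : ℕ∞) N) (hB : ContDiff ℝ (⊤ : ℕ∞) B)
    (hτ : ContDiff ℝ (⊤ : ℕ∞) τ)
    (hα' : ∀ s ∈ I, deriv α s = T s)
    (hT' : ∀ s ∈ I, deriv T s = N s)
    (hN' : ∀ s ∈ I, deriv N s = τ s • T s - B s)
    (hB' : ∀ s ∈ I, deriv B s = (-(τ s)) • N s) :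
    ∀ s ∈ I,
      det3 (iteratedDeriv 3 α s) (iteratedDeriv 4 α s) (iteratedDeriv 5 α s) =
        det3 (T s) (N s) (B s) *
          (2 * τ s * deriv (deriv τ) s - 3 * (deriv τ s) ^ 2) := by
  have hτd : Differentiable ℝ τ := hτ.differentiable (by simp)
  have hτ' : ContDiff ℝ (⊤ : ℕ∞) (deriv τ) := (contDiff_infty_iff_deriv.mp hτ).2
  have hτ'd : Differentiable ℝ (deriv τ) := hτ'.differentiable (by simp)
  have hTd : Differentiable ℝ T := hT.differentiable (by simp)
  have hNd : Differentiable ℝ N := hN.differentiable (by simp)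
  have hBd : Differentiable ℝ B := hB.differentiable (by simp)
  -- second derivative
  have hd2 : ∀ t ∈ I, deriv (deriv α) t = N t := by
    intro t ht
    have h1 : deriv α =ᶠ[nhds t] T := Filter.eventuallyEq_of_mem (hIopen.mem_nhds ht) hα'
    rw [h1.deriv_eq, hT' t ht]
  have hd3 : ∀ t ∈ I, deriv (deriv (deriv α)) t = τ t • T t - B t := by
    intro t ht
    have h1 : deriv (deriv α) =ᶠ[nhds t] N := Filter.eventuallyEq_of_mem (hIopen.mem_nhds ht) hd2
    rw [h1.deriv_eq, hN' t ht]
  have hd4 : ∀ t ∈ I, deriv (deriv (deriv (deriv α))) t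
      = deriv τ t • T t + (2 * τ t) • N t := by
    intro t ht
    have h1 : deriv (deriv (deriv α)) =ᶠ[nhds t] (fun u => τ u • T u - B u) :=
      Filter.eventuallyEq_of_mem (hIopen.mem_nhds ht) hd3
    rw [h1.deriv_eq, deriv_fun_sub ((hτd t).fun_smul (hTd t)) (hBd t),
      deriv_fun_smul (hτd t) (hTd t), hT' t ht, hB' t ht]
    ext i
    simp [Pi.smul_apply, Pi.sub_apply, Pi.add_apply, smul_eq_mul]
    ring
  intro s hs
  have h4 : deriv (deriv (deriv (deriv α))) =ᶠ[nhds s]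
      (fun u => deriv τ u • T u + (2 * τ u) • N u) :=
    Filter.eventuallyEq_of_mem (hIopen.mem_nhds hs) hd4
  have hv5 : deriv (deriv (deriv (deriv (deriv α)))) s
      = (deriv (deriv τ) s + 2 * τ s ^ 2) • T s + (3 * deriv τ s) • N s
        + (-(2 * τ s)) • B s := by
    rw [h4.deriv_eq,
      deriv_fun_add ((hτ'd s).fun_smul (hTd s)) (((hτd s).const_mul 2).fun_smul (hNd s)),
      deriv_fun_smul (hτ'd s) (hTd s),
      deriv_fun_smul ((hτd s).const_mul 2) (hNd s),
      deriv_const_mul 2 (hτd s),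
      hT' s hs, hN' s hs]
    ext i
    simp [Pi.smul_apply, Pi.sub_apply, Pi.add_apply, smul_eq_mul]
    ring
  have e3 : iteratedDeriv 3 α = deriv (deriv (deriv α)) := by
    rw [iteratedDeriv_eq_iterate]; rfl
  have e4 : iteratedDeriv 4 α = deriv (deriv (deriv (deriv α))) := by
    rw [iteratedDeriv_eq_iterate]; rfl
  have e5 : iteratedDeriv 5 α = deriv (deriv (deriv (deriv (deriv α)))) := by
    rw [iteratedDeriv_eq_iterate]; rfl
  rw [e3, e4, e5, hd3 s hs, hd4 s hs, hv5]
  simp only [det3, Matrix.det_fin_three, Matrix.of_apply, Matrix.cons_val',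
    Matrix.cons_val_zero, Matrix.cons_val_one, Matrix.head_cons, Matrix.empty_val',
    Matrix.cons_val_fin_one, Matrix.head_fin_const, Matrix.cons_val_two, Matrix.tail_cons,
    Pi.smul_apply, Pi.sub_apply, Pi.add_apply, Pi.neg_apply, smul_eq_mul]
  ring
end
end

section
/- Let I ⊆ ℝ be an open interval, let α : ℝ → ℝ³ be smooth, and let T, N, B : ℝ → ℝ³ and τ : ℝ → ℝ be smooth maps such that on I: α' = T, T' = N, N' = τ T − B, B' = −τ N, and det(T(s), N(s), B(s)) ≠ 0 for all s ∈ I. Then det(α⁽³⁾(s), α⁽⁴⁾(s), α⁽⁵⁾(s)) = 0 for all s ∈ I if and only if 2 τ(s) τ''(s) − 3 τ'(s)² = 0 for all s ∈ I. -/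
noncomputable section

lemma det3_comb (T N B : Fin 3 → ℝ) (p q r a b c : ℝ) :
    det3 (p • T - B) (q • T + r • N) (a • T + b • N - c • B)
      = (r * a - p * r * c - q * b) * det3 T N B := by
  simp only [det3, Matrix.det_fin_three, Matrix.of_apply, Matrix.cons_val', Matrix.cons_val_zero,
    Matrix.cons_val_one, Matrix.head_cons, Matrix.empty_val', Matrix.cons_val_fin_one,
    Matrix.head_fin_const, Matrix.cons_val_two, Matrix.tail_cons, Pi.sub_apply, Pi.add_apply,
    Pi.smul_apply, smul_eq_mul]
  ring

theorem stmt_12 (I : Set ℝ) (hIopen : IsOpen I) (hIconn : I.OrdConnected)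
    (α T N B : ℝ → (Fin 3 → ℝ)) (τ : ℝ → ℝ)
    (hα : ContDiff ℝ (⊤ : ℕ∞) α) (hT : ContDiff ℝ (⊤ : ℕ∞) T)
    (hN : ContDiff ℝ (⊤ : ℕ∞) N) (hB : ContDiff ℝ (⊤ : ℕ∞) B)
    (hτ : ContDiff ℝ (⊤ : ℕ∞) τ)
    (hα' : ∀ s ∈ I, deriv α s = T s)
    (hT' : ∀ s ∈ I, deriv T s = N s)
    (hN' : ∀ s ∈ I, deriv N s = τ s • T s - B s)
    (hB' : ∀ s ∈ I, deriv B s = (-(τ s)) • N s)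
    (hdet : ∀ s ∈ I, det3 (T s) (N s) (B s) ≠ 0) :
    (∀ s ∈ I,
        det3 (iteratedDeriv 3 α s) (iteratedDeriv 4 α s) (iteratedDeriv 5 α s) = 0) ↔
      (∀ s ∈ I, 2 * τ s * deriv (deriv τ) s - 3 * (deriv τ s) ^ 2 = 0) := by
  have hτ1 : ContDiff ℝ (⊤ : ℕ∞) (deriv τ) := (contDiff_infty_iff_deriv.mp hτ).2
  have hTd : ∀ s ∈ I, HasDerivAt T (N s) s := fun s hs => by
    rw [← hT' s hs]; exact (hT.differentiable (by simp) s).hasDerivAt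
  have hNd : ∀ s ∈ I, HasDerivAt N (τ s • T s - B s) s := fun s hs => by
    rw [← hN' s hs]; exact (hN.differentiable (by simp) s).hasDerivAt
  have hBd : ∀ s ∈ I, HasDerivAt B ((-(τ s)) • N s) s := fun s hs => by
    rw [← hB' s hs]; exact (hB.differentiable (by simp) s).hasDerivAt
  have hτd : ∀ s : ℝ, HasDerivAt τ (deriv τ s) s := fun s =>
    (hτ.differentiable (by simp) s).hasDerivAt
  have hτdd : ∀ s : ℝ, HasDerivAt (deriv τ) (deriv (deriv τ) s) s := fun s =>
    (hτ1.differentiable (by simp) s).hasDerivAt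
  -- second derivative of α
  have h2 : ∀ s ∈ I, deriv (deriv α) s = N s := by
    intro s hs
    have e1 : deriv α =ᶠ[nhds s] T :=
      Filter.eventuallyEq_of_mem (hIopen.mem_nhds hs) (fun x hx => hα' x hx)
    rw [e1.deriv_eq, hT' s hs]
  have h3 : ∀ s ∈ I, iteratedDeriv 3 α s = τ s • T s - B s := by
    intro s hs
    have e2 : deriv (deriv α) =ᶠ[nhds s] N :=
      Filter.eventuallyEq_of_mem (hIopen.mem_nhds hs) (fun x hx => h2 x hx)
    have : iteratedDeriv 3 α s = deriv (deriv (deriv α)) s := by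
      simp [iteratedDeriv_succ, iteratedDeriv_zero]
    rw [this, e2.deriv_eq, hN' s hs]
  have h4 : ∀ s ∈ I, iteratedDeriv 4 α s = deriv τ s • T s + (2 * τ s) • N s := by
    intro s hs
    have e3 : iteratedDeriv 3 α =ᶠ[nhds s] (fun t => τ t • T t - B t) :=
      Filter.eventuallyEq_of_mem (hIopen.mem_nhds hs) (fun x hx => h3 x hx)
    have : iteratedDeriv 4 α s = deriv (iteratedDeriv 3 α) s := by
      rw [iteratedDeriv_succ]
    rw [this, e3.deriv_eq]
    have hd : HasDerivAt (fun t => τ t • T t - B t)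
        ((τ s • N s + deriv τ s • T s) - (-(τ s)) • N s) s :=
      ((hτd s).smul (hTd s hs)).sub (hBd s hs)
    rw [hd.deriv]
    module
  have h5 : ∀ s ∈ I, iteratedDeriv 5 α s =
      (deriv (deriv τ) s + 2 * (τ s) ^ 2) • T s + (3 * deriv τ s) • N s - (2 * τ s) • B s := by
    intro s hs
    have e4 : iteratedDeriv 4 α =ᶠ[nhds s] (fun t => deriv τ t • T t + (2 * τ t) • N t) :=
      Filter.eventuallyEq_of_mem (hIopen.mem_nhds hs) (fun x hx => h4 x hx)
    have : iteratedDeriv 5 α s = deriv (iteratedDeriv 4 α) s := by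
      rw [iteratedDeriv_succ]
    rw [this, e4.deriv_eq]
    have hd : HasDerivAt (fun t => deriv τ t • T t + (2 * τ t) • N t)
        ((deriv τ s • N s + deriv (deriv τ) s • T s) +
          ((2 * τ s) • (τ s • T s - B s) + (2 * deriv τ s) • N s)) s :=
      ((hτdd s).smul (hTd s hs)).add (((hτd s).const_mul 2).smul (hNd s hs))
    rw [hd.deriv]
    module
  have key : ∀ s ∈ I,
      det3 (iteratedDeriv 3 α s) (iteratedDeriv 4 α s) (iteratedDeriv 5 α s)
        = (2 * τ s * deriv (deriv τ) s - 3 * (deriv τ s) ^ 2) * det3 (T s) (N s) (B s) := by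
    intro s hs
    rw [h3 s hs, h4 s hs, h5 s hs, det3_comb]
    ring_nf
  constructor
  · intro h s hs
    have := h s hs
    rw [key s hs] at this
    rcases mul_eq_zero.mp this with h0 | h0
    · exact h0
    · exact absurd h0 (hdet s hs)
  · intro h s hs
    rw [key s hs, h s hs, zero_mul]
end
end

section
/- Let I ⊆ ℝ be an open interval and let τ : ℝ → ℝ be smooth with τ(s) ≠ 0 for all s ∈ I and 2 τ(s) τ''(s) − 3 τ'(s)² = 0 for all s ∈ I. Then there exist real constants a, b, c such that b·s + c ≠ 0 for all s ∈ I and τ(s) = a / (b·s + c)² for all s ∈ I. -/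
noncomputable section

lemma const_of_hasDerivAt_zero' {I : Set ℝ} (hIopen : IsOpen I) (hconv : Convex ℝ I)
    {f : ℝ → ℝ} (hf : ∀ s ∈ I, HasDerivAt f 0 s) {x y : ℝ} (hx : x ∈ I) (hy : y ∈ I) :
    f x = f y := by
  apply hconv.is_const_of_fderivWithin_eq_zero (f := f)
    (fun s hs => ((hf s hs).differentiableAt).differentiableWithinAt) ?_ hx hy
  intro s hs
  rw [fderivWithin_of_isOpen hIopen hs, (hf s hs).hasFDerivAt.fderiv]
  ext v; simp

lemma key_pos (I : Set ℝ) (hIopen : IsOpen I) (hIconn : I.OrdConnected)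
    (τ : ℝ → ℝ) (hτ : ContDiff ℝ (⊤ : ℕ∞) τ)
    (hpos : ∀ s ∈ I, 0 < τ s)
    (hode : ∀ s ∈ I,
      2 * τ s * deriv (deriv τ) s - 3 * (deriv τ s) ^ 2 = 0)
    (hne : I.Nonempty) :
    ∃ a b c : ℝ, (∀ s ∈ I, b * s + c ≠ 0) ∧
      ∀ s ∈ I, τ s = a / (b * s + c) ^ 2 := by
  obtain ⟨s₀, hs₀⟩ := hne
  have hconv : Convex ℝ I := hIconn.convex
  have hτd : Differentiable ℝ τ := hτ.differentiable (by simp)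
  have hτ' : ContDiff ℝ (⊤ : ℕ∞) (deriv τ) := (contDiff_infty_iff_deriv.mp hτ).2
  have hτ'd : Differentiable ℝ (deriv τ) := hτ'.differentiable (by simp)
  set g : ℝ → ℝ := fun s => (Real.sqrt (τ s))⁻¹ with hgdef
  set G : ℝ → ℝ := fun s => -(deriv τ s) / (2 * τ s * Real.sqrt (τ s)) with hGdef
  have hsqrt : ∀ s ∈ I, HasDerivAt (fun y => Real.sqrt (τ y))
      (1 / (2 * Real.sqrt (τ s)) * deriv τ s) s := by
    intro s hs
    exact (Real.hasDerivAt_sqrt (hpos s hs).ne').comp s (hτd s).hasDerivAt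
  have hg : ∀ s ∈ I, HasDerivAt g (G s) s := by
    intro s hs
    have hts := hpos s hs
    have hsq0 : Real.sqrt (τ s) ≠ 0 := by positivity
    have h2 := (hsqrt s hs).inv hsq0
    convert h2 using 1
    · rfl
    · rfl
    · rfl
    have hsq : Real.sqrt (τ s) ^ 2 = τ s := Real.sq_sqrt hts.le
    rw [hGdef]
    simp only
    rw [hsq]
    field_simp
  have hG0 : ∀ s ∈ I, HasDerivAt G 0 s := by
    intro s hs
    have hts := hpos s hs
    have hsq0 : Real.sqrt (τ s) ≠ 0 := by positivity
    have hden : 2 * τ s * Real.sqrt (τ s) ≠ 0 := by positivity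
    have hnum : HasDerivAt (fun y => -(deriv τ y)) (-(deriv (deriv τ) s)) s :=
      ((hτ'd s).hasDerivAt).neg
    have hden' : HasDerivAt (fun y => 2 * τ y * Real.sqrt (τ y))
        (2 * deriv τ s * Real.sqrt (τ s) +
          2 * τ s * (1 / (2 * Real.sqrt (τ s)) * deriv τ s)) s :=
      (((hτd s).hasDerivAt).const_mul 2).mul (hsqrt s hs)
    have h3 := hnum.div hden' hden
    convert h3 using 1
    · rfl
    · rfl
    · rfl
    have hsq : Real.sqrt (τ s) ^ 2 = τ s := Real.sq_sqrt hts.le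
    have hode' := hode s hs
    rw [eq_comm, div_eq_zero_iff]
    left
    field_simp
    nlinarith [Real.sqrt_pos.mpr hts, hsq, hode']
  have hGconst : ∀ s ∈ I, G s = G s₀ := fun s hs =>
    const_of_hasDerivAt_zero' hIopen hconv hG0 hs hs₀
  set b : ℝ := G s₀ with hb
  have hgb : ∀ s ∈ I, HasDerivAt (fun y => g y - b * y) 0 s := by
    intro s hs
    have := (hg s hs).sub ((hasDerivAt_id s).const_mul b)
    rw [hGconst s hs] at this
    simp at this
    exact this
  set c : ℝ := g s₀ - b * s₀ with hc
  have hgl : ∀ s ∈ I, g s = b * s + c := by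
    intro s hs
    have := const_of_hasDerivAt_zero' hIopen hconv hgb hs hs₀
    rw [hc]; linarith
  refine ⟨1, b, c, ?_, ?_⟩
  · intro s hs
    rw [← hgl s hs, hgdef]
    have := hpos s hs
    positivity
  · intro s hs
    have hts := hpos s hs
    have hsq0 : Real.sqrt (τ s) ≠ 0 := by positivity
    rw [← hgl s hs, hgdef]
    simp only
    rw [inv_pow, Real.sq_sqrt hts.le, one_div, inv_inv]

theorem stmt_13 (I : Set ℝ) (hIopen : IsOpen I) (hIconn : I.OrdConnected)
    (τ : ℝ → ℝ) (hτ : ContDiff ℝ (⊤ : ℕ∞) τ)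
    (hτ0 : ∀ s ∈ I, τ s ≠ 0)
    (hode : ∀ s ∈ I,
      2 * τ s * deriv (deriv τ) s - 3 * (deriv τ s) ^ 2 = 0) :
    ∃ a b c : ℝ, (∀ s ∈ I, b * s + c ≠ 0) ∧
      ∀ s ∈ I, τ s = a / (b * s + c) ^ 2 := by
  rcases I.eq_empty_or_nonempty with hI | hne
  · exact ⟨1, 0, 1, by simp [hI], by simp [hI]⟩
  obtain ⟨s₀, hs₀⟩ := hne
  have hconv : Convex ℝ I := hIconn.convex
  have hcont : ContinuousOn τ I := (hτ.continuous).continuousOn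
  -- the sign of τ is constant on I
  have hsign : (∀ s ∈ I, 0 < τ s) ∨ (∀ s ∈ I, τ s < 0) := by
    rcases lt_or_gt_of_ne (hτ0 s₀ hs₀) with h0 | h0
    · right
      intro s hs
      by_contra hle
      push_neg at hle
      have hpos : 0 < τ s := lt_of_le_of_ne hle (Ne.symm (hτ0 s hs))
      have h01 : (0:ℝ) ∈ Set.Icc (τ s₀) (τ s) :=
        Set.mem_Icc.mpr ⟨le_of_lt h0, le_of_lt hpos⟩
      obtain ⟨z, hz, hz0⟩ := hconv.isPreconnected.intermediate_value hs₀ hs hcont h01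
      exact hτ0 z hz hz0
    · left
      intro s hs
      by_contra hle
      push_neg at hle
      have hneg : τ s < 0 := lt_of_le_of_ne hle (hτ0 s hs)
      have h01 : (0:ℝ) ∈ Set.Icc (τ s) (τ s₀) := Set.mem_Icc.mpr ⟨le_of_lt hneg, le_of_lt h0⟩
      have := hconv.isPreconnected.intermediate_value hs hs₀ hcont h01
      obtain ⟨z, hz, hz0⟩ := this
      exact hτ0 z hz hz0
  rcases hsign with hpos | hneg
  · exact key_pos I hIopen hIconn τ hτ hpos hode ⟨s₀, hs₀⟩
  · have hτneg : ContDiff ℝ (⊤ : ℕ∞) (fun s => -τ s) := hτ.neg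
    have hderiv_neg : deriv (fun s => -τ s) = fun s => -(deriv τ s) := by
      funext s; exact deriv.neg
    have hode' : ∀ s ∈ I,
        2 * (fun s => -τ s) s * deriv (deriv (fun s => -τ s)) s
          - 3 * (deriv (fun s => -τ s) s) ^ 2 = 0 := by
      intro s hs
      rw [hderiv_neg]
      have h2 : deriv (fun s => -(deriv τ s)) s = -(deriv (deriv τ) s) := deriv.neg
      rw [h2]
      have := hode s hs
      ring_nf
      ring_nf at this
      linarith
    obtain ⟨a, b, c, h1, h2⟩ := key_pos I hIopen hIconn (fun s => -τ s) hτneg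
      (fun s hs => by simpa using hneg s hs) hode' ⟨s₀, hs₀⟩
    refine ⟨-a, b, c, h1, fun s hs => ?_⟩
    have := h2 s hs
    rw [neg_div]
    linarith
end
end

section
/- Let I ⊆ ℝ be an open interval, let α : ℝ → ℝ³ be smooth, and let T, N, B : ℝ → ℝ³ and τ : ℝ → ℝ be smooth maps such that on I: α' = T, T' = N, N' = τ T − B, B' = −τ N, and for all s ∈ I: g(T(s),T(s)) = 0, g(B(s),B(s)) = 0, g(N(s),N(s)) = 1, g(T(s),B(s)) = 1, g(T(s),N(s)) = 0, g(N(s),B(s)) = 0. Then the following are equivalent: (i) there exists a vector u ∈ ℝ³ with u ≠ 0 such that the function s ↦ g(N(s), u) is constant on I; (ii) det(α⁽³⁾(s), α⁽⁴⁾(s), α⁽⁵⁾(s)) = 0 for all s ∈ I. -/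
noncomputable section

open Set Filter Topology

/-- The Lorentzian inner product on Minkowski 3-space `E₁³`. -/
def lg (x y : Fin 3 → ℝ) : ℝ := -(x 0 * y 0) + x 1 * y 1 + x 2 * y 2

lemma det3_formula (u v w : Fin 3 → ℝ) : det3 u v w =
    u 0 * (v 1 * w 2 - v 2 * w 1) - u 1 * (v 0 * w 2 - v 2 * w 0)
      + u 2 * (v 0 * w 1 - v 1 * w 0) := by
  simp [det3, Matrix.det_fin_three]; ring

lemma det3_sq (u v w : Fin 3 → ℝ) : det3 u v w ^ 2 =
    -(lg u u * (lg v v * lg w w - lg v w * lg v w)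
      - lg u v * (lg u v * lg w w - lg v w * lg u w)
      + lg u w * (lg u v * lg v w - lg v v * lg u w)) := by
  simp only [det3_formula, lg]; ring

lemma eq_zero_of_lg_eq_zero (v₁ v₂ v₃ u : Fin 3 → ℝ) (hd : det3 v₁ v₂ v₃ ≠ 0)
    (h1 : lg v₁ u = 0) (h2 : lg v₂ u = 0) (h3 : lg v₃ u = 0) : u = 0 := by
  simp only [lg] at h1 h2 h3
  rw [det3_formula] at hd
  funext i
  fin_cases i
  · show u 0 = 0
    have : u 0 * (v₁ 0 * (v₂ 1 * v₃ 2 - v₂ 2 * v₃ 1) - v₁ 1 * (v₂ 0 * v₃ 2 - v₂ 2 * v₃ 0)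
      + v₁ 2 * (v₂ 0 * v₃ 1 - v₂ 1 * v₃ 0)) = 0 := by
      linear_combination (-(v₂ 1 * v₃ 2 - v₂ 2 * v₃ 1)) * h1 + (v₁ 1 * v₃ 2 - v₁ 2 * v₃ 1) * h2 + (-(v₁ 1 * v₂ 2 - v₁ 2 * v₂ 1)) * h3
    exact (mul_eq_zero.mp this).resolve_right hd
  · show u 1 = 0
    have : u 1 * (v₁ 0 * (v₂ 1 * v₃ 2 - v₂ 2 * v₃ 1) - v₁ 1 * (v₂ 0 * v₃ 2 - v₂ 2 * v₃ 0)
      + v₁ 2 * (v₂ 0 * v₃ 1 - v₂ 1 * v₃ 0)) = 0 := by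
      linear_combination (-(v₂ 0 * v₃ 2 - v₂ 2 * v₃ 0)) * h1 + (v₁ 0 * v₃ 2 - v₁ 2 * v₃ 0) * h2 + (-(v₁ 0 * v₂ 2 - v₁ 2 * v₂ 0)) * h3
    exact (mul_eq_zero.mp this).resolve_right hd
  · show u 2 = 0
    have : u 2 * (v₁ 0 * (v₂ 1 * v₃ 2 - v₂ 2 * v₃ 1) - v₁ 1 * (v₂ 0 * v₃ 2 - v₂ 2 * v₃ 0)
      + v₁ 2 * (v₂ 0 * v₃ 1 - v₂ 1 * v₃ 0)) = 0 := by
      linear_combination (v₂ 0 * v₃ 1 - v₂ 1 * v₃ 0) * h1 + (-(v₁ 0 * v₃ 1 - v₁ 1 * v₃ 0)) * h2 + (v₁ 0 * v₂ 1 - v₁ 1 * v₂ 0) * h3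
    exact (mul_eq_zero.mp this).resolve_right hd

lemma const_on_of_hasDerivAt_zero {E : Type*} [NormedAddCommGroup E] [NormedSpace ℝ E]
    {I : Set ℝ} (hIconn : I.OrdConnected) {f : ℝ → E}
    (hf : ∀ x ∈ I, HasDerivAt f 0 x) :
    ∀ s ∈ I, ∀ t ∈ I, f s = f t := by
  have key : ∀ s ∈ I, ∀ t ∈ I, t ≤ s → f s = f t := by
    intro s hs t ht hts
    have hsub : Set.Icc t s ⊆ I := hIconn.out ht hs
    exact constant_of_has_deriv_right_zero
      (fun x hx => ((hf x (hsub hx)).continuousAt).continuousWithinAt)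
      (fun x hx => ((hf x (hsub (Ico_subset_Icc_self hx))).hasDerivWithinAt))
      s (by constructor <;> simp [hts])
  intro s hs t ht
  rcases le_total t s with h | h
  · exact key s hs t ht h
  · exact (key t ht s hs h).symm

lemma hasDerivAt_lg_left {V : ℝ → Fin 3 → ℝ} {W : Fin 3 → ℝ} {u : Fin 3 → ℝ} {s : ℝ}
    (h : HasDerivAt V W s) : HasDerivAt (fun t => lg (V t) u) (lg W u) s := by
  have hc := hasDerivAt_pi.mp h
  exact ((((hc 0).mul_const (u 0)).neg.add ((hc 1).mul_const (u 1))).add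
    ((hc 2).mul_const (u 2)))

lemma dichotomy {I : Set ℝ} (hIconn : I.OrdConnected)
    {τ : ℝ → ℝ} (hτ : ContDiff ℝ (⊤ : ℕ∞) τ)
    (E : ∀ s ∈ I, 2 * τ s * deriv (deriv τ) s = 3 * (deriv τ s) ^ 2)
    {s₁ : ℝ} (hs₁ : s₁ ∈ I) (h1 : deriv τ s₁ ≠ 0) :
    ∀ b ∈ I, deriv τ b ≠ 0 := by
  have hτd : Differentiable ℝ τ := hτ.differentiable (by simp)
  have hdτsm : ContDiff ℝ (⊤ : ℕ∞) (deriv τ) := (contDiff_infty_iff_deriv.mp hτ).2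
  have hdτd : Differentiable ℝ (deriv τ) := hdτsm.differentiable (by simp)
  have hdτ : ∀ s, HasDerivAt τ (deriv τ s) s := fun s => (hτd s).hasDerivAt
  have hddτ : ∀ s, HasDerivAt (deriv τ) (deriv (deriv τ) s) s := fun s => (hdτd s).hasDerivAt
  have τcont : Continuous τ := hτd.continuous
  have dτcont : Continuous (deriv τ) := hdτd.continuous
  have hτs₁ : τ s₁ ≠ 0 := by
    intro h0
    have := E s₁ hs₁
    rw [h0] at this
    have : (deriv τ s₁) ^ 2 = 0 := by linarith
    exact h1 (by nlinarith [sq_nonneg (deriv τ s₁)])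
  intro b hb hb0
  rcases lt_trichotomy s₁ b with hlt | heq | hgt
  · set Z : Set ℝ := Icc s₁ b ∩ (deriv τ) ⁻¹' {0} with hZ
    have hZc : IsClosed Z := isClosed_Icc.inter (isClosed_singleton.preimage dτcont)
    have hZne : Z.Nonempty := ⟨b, ⟨hlt.le, le_refl b⟩, hb0⟩
    have hZbdd : BddBelow Z := ⟨s₁, fun z hz => hz.1.1⟩
    set a := sInf Z with ha
    have haZ : a ∈ Z := hZc.csInf_mem hZne hZbdd
    have hdτa : deriv τ a = 0 := haZ.2
    have haI : a ∈ I := hIconn.out hs₁ hb haZ.1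
    have hs₁a : s₁ < a := lt_of_le_of_ne haZ.1.1 (fun h => h1 (h ▸ hdτa))
    have hsubI : Ico s₁ a ⊆ I := fun s hs =>
      hIconn.out hs₁ hb ⟨hs.1, le_trans hs.2.le haZ.1.2⟩
    have hne : ∀ s ∈ Ico s₁ a, deriv τ s ≠ 0 := by
      intro s hs h0
      exact absurd (csInf_le hZbdd ⟨⟨hs.1, le_trans hs.2.le haZ.1.2⟩, h0⟩) (not_le.mpr hs.2)
    have hF0 : ∀ s ∈ Ico s₁ a, HasDerivAt (fun t => τ t / deriv τ t + t / 2) 0 s := by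
      intro s hs
      have hds := hne s hs
      have hsI := hsubI hs
      have H := ((hdτ s).div (hddτ s) hds).add ((hasDerivAt_id s).div_const 2)
      have hval : (deriv τ s * deriv τ s - τ s * deriv (deriv τ) s) / deriv τ s ^ 2 + 1 / 2
          = 0 := by
        field_simp
        linear_combination (-1 : ℝ) * (E s hsI)
      rwa [hval] at H
    have hG0 : ∀ s ∈ Ico s₁ a,
        HasDerivAt (fun t => τ t * (τ t / deriv τ t) ^ 2) 0 s := by
      intro s hs
      have hds := hne s hs
      have hsI := hsubI hs
      have H : HasDerivAt (fun t => τ t * (τ t / deriv τ t) ^ 2) _ s :=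
        (hdτ s).mul (((hdτ s).div (hddτ s) hds).pow 2)
      have H2 : HasDerivAt (fun t => τ t * (τ t / deriv τ t) ^ 2) 0 s := by
        convert H using 1
        simp only [Pi.div_apply, Nat.cast_ofNat, show (2:ℕ) - 1 = 1 from rfl, pow_one]
        field_simp
        ring_nf
        linear_combination (τ s ^ 2) * (E s hsI)
      exact H2
    have hFc := const_on_of_hasDerivAt_zero ordConnected_Ico hF0
    have hGc := const_on_of_hasDerivAt_zero ordConnected_Ico hG0
    have hs₁m : s₁ ∈ Ico s₁ a := ⟨le_refl _, hs₁a⟩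
    have hIcomem : Ico s₁ a ∈ 𝓝[<] a :=
      mem_of_superset (Ioo_mem_nhdsLT_of_mem ⟨hs₁a, le_refl a⟩)
        (fun x hx => ⟨hx.1.le, hx.2⟩)
    have hPhi : ∀ s ∈ Ico s₁ a,
        τ s ^ 3 * deriv τ s₁ ^ 2 - τ s₁ ^ 3 * deriv τ s ^ 2 = 0 := by
      intro s hs
      have hG := hGc s hs s₁ hs₁m
      have hds := hne s hs
      field_simp at hG
      linear_combination hG
    have hτa : τ a = 0 := by
      have ht1 : Tendsto (fun s => τ s ^ 3 * deriv τ s₁ ^ 2 - τ s₁ ^ 3 * deriv τ s ^ 2)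
          (𝓝[<] a) (𝓝 (τ a ^ 3 * deriv τ s₁ ^ 2 - τ s₁ ^ 3 * deriv τ a ^ 2)) :=
        (((τcont.pow 3).mul continuous_const).sub
          (continuous_const.mul (dτcont.pow 2))).continuousAt.tendsto.mono_left nhdsWithin_le_nhds
      have ht2 : Tendsto (fun s => τ s ^ 3 * deriv τ s₁ ^ 2 - τ s₁ ^ 3 * deriv τ s ^ 2)
          (𝓝[<] a) (𝓝 0) := by
        refine Tendsto.congr' ?_ tendsto_const_nhds
        exact eventually_of_mem hIcomem (fun x hx => (hPhi x hx).symm)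
      have := tendsto_nhds_unique ht1 ht2
      rw [hdτa] at this
      have : τ a ^ 3 * deriv τ s₁ ^ 2 = 0 := by linarith
      rcases mul_eq_zero.mp this with h | h
      · exact pow_eq_zero_iff (by norm_num) |>.mp h
      · exact absurd (pow_eq_zero_iff (by norm_num) |>.mp h) h1
    have hPsi : ∀ s ∈ Ico s₁ a,
        τ s * ((τ s₁ / deriv τ s₁ + s₁ / 2) - s / 2) ^ 2 = τ s₁ * (τ s₁ / deriv τ s₁) ^ 2 := by
      intro s hs
      have hF := hFc s hs s₁ hs₁m
      have hG := hGc s hs s₁ hs₁m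
      have : τ s / deriv τ s = τ s₁ / deriv τ s₁ + s₁ / 2 - s / 2 := by linarith
      rw [← this]
      exact hG
    have hfin : τ a * ((τ s₁ / deriv τ s₁ + s₁ / 2) - a / 2) ^ 2
        = τ s₁ * (τ s₁ / deriv τ s₁) ^ 2 := by
      have ht1 : Tendsto (fun s => τ s * ((τ s₁ / deriv τ s₁ + s₁ / 2) - s / 2) ^ 2)
          (𝓝[<] a) (𝓝 (τ a * ((τ s₁ / deriv τ s₁ + s₁ / 2) - a / 2) ^ 2)) :=
        (τcont.mul ((continuous_const.sub
          (continuous_id.div_const 2)).pow 2)).continuousAt.tendsto.mono_left nhdsWithin_le_nhds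
      have ht2 : Tendsto (fun s => τ s * ((τ s₁ / deriv τ s₁ + s₁ / 2) - s / 2) ^ 2)
          (𝓝[<] a) (𝓝 (τ s₁ * (τ s₁ / deriv τ s₁) ^ 2)) := by
        refine Tendsto.congr' ?_ tendsto_const_nhds
        exact eventually_of_mem hIcomem (fun x hx => (hPsi x hx).symm)
      exact tendsto_nhds_unique ht1 ht2
    rw [hτa, zero_mul] at hfin
    have hdiv : τ s₁ / deriv τ s₁ ≠ 0 := div_ne_zero hτs₁ h1
    exact hτs₁ (by
      rcases mul_eq_zero.mp hfin.symm with h | h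
      · exact h
      · exact absurd (pow_eq_zero_iff (by norm_num) |>.mp h) hdiv)
  · exact h1 (heq ▸ hb0)
  · set Z : Set ℝ := Icc b s₁ ∩ (deriv τ) ⁻¹' {0} with hZ
    have hZc : IsClosed Z := isClosed_Icc.inter (isClosed_singleton.preimage dτcont)
    have hZne : Z.Nonempty := ⟨b, ⟨le_refl b, hgt.le⟩, hb0⟩
    have hZbdd : BddAbove Z := ⟨s₁, fun z hz => hz.1.2⟩
    set a := sSup Z with ha
    have haZ : a ∈ Z := hZc.csSup_mem hZne hZbdd
    have hdτa : deriv τ a = 0 := haZ.2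
    have haI : a ∈ I := hIconn.out hb hs₁ haZ.1
    have hs₁a : a < s₁ := lt_of_le_of_ne haZ.1.2 (fun h => h1 (h ▸ hdτa))
    have hsubI : Ioc a s₁ ⊆ I := fun s hs =>
      hIconn.out hb hs₁ ⟨le_trans haZ.1.1 hs.1.le, hs.2⟩
    have hne : ∀ s ∈ Ioc a s₁, deriv τ s ≠ 0 := by
      intro s hs h0
      exact absurd (le_csSup hZbdd ⟨⟨le_trans haZ.1.1 hs.1.le, hs.2⟩, h0⟩) (not_le.mpr hs.1)
    have hF0 : ∀ s ∈ Ioc a s₁, HasDerivAt (fun t => τ t / deriv τ t + t / 2) 0 s := by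
      intro s hs
      have hds := hne s hs
      have hsI := hsubI hs
      have H := ((hdτ s).div (hddτ s) hds).add ((hasDerivAt_id s).div_const 2)
      have hval : (deriv τ s * deriv τ s - τ s * deriv (deriv τ) s) / deriv τ s ^ 2 + 1 / 2
          = 0 := by
        field_simp
        linear_combination (-1 : ℝ) * (E s hsI)
      rwa [hval] at H
    have hG0 : ∀ s ∈ Ioc a s₁,
        HasDerivAt (fun t => τ t * (τ t / deriv τ t) ^ 2) 0 s := by
      intro s hs
      have hds := hne s hs
      have hsI := hsubI hs
      have H : HasDerivAt (fun t => τ t * (τ t / deriv τ t) ^ 2) _ s :=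
        (hdτ s).mul (((hdτ s).div (hddτ s) hds).pow 2)
      have H2 : HasDerivAt (fun t => τ t * (τ t / deriv τ t) ^ 2) 0 s := by
        convert H using 1
        simp only [Pi.div_apply, Nat.cast_ofNat, show (2:ℕ) - 1 = 1 from rfl, pow_one]
        field_simp
        ring_nf
        linear_combination (τ s ^ 2) * (E s hsI)
      exact H2
    have hFc := const_on_of_hasDerivAt_zero ordConnected_Ioc hF0
    have hGc := const_on_of_hasDerivAt_zero ordConnected_Ioc hG0
    have hs₁m : s₁ ∈ Ioc a s₁ := ⟨hs₁a, le_refl _⟩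
    have hIcomem : Ioc a s₁ ∈ 𝓝[>] a :=
      mem_of_superset (Ioo_mem_nhdsGT_of_mem ⟨le_refl a, hs₁a⟩)
        (fun x hx => ⟨hx.1, hx.2.le⟩)
    have hPhi : ∀ s ∈ Ioc a s₁,
        τ s ^ 3 * deriv τ s₁ ^ 2 - τ s₁ ^ 3 * deriv τ s ^ 2 = 0 := by
      intro s hs
      have hG := hGc s hs s₁ hs₁m
      have hds := hne s hs
      field_simp at hG
      linear_combination hG
    have hτa : τ a = 0 := by
      have ht1 : Tendsto (fun s => τ s ^ 3 * deriv τ s₁ ^ 2 - τ s₁ ^ 3 * deriv τ s ^ 2)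
          (𝓝[>] a) (𝓝 (τ a ^ 3 * deriv τ s₁ ^ 2 - τ s₁ ^ 3 * deriv τ a ^ 2)) :=
        (((τcont.pow 3).mul continuous_const).sub
          (continuous_const.mul (dτcont.pow 2))).continuousAt.tendsto.mono_left nhdsWithin_le_nhds
      have ht2 : Tendsto (fun s => τ s ^ 3 * deriv τ s₁ ^ 2 - τ s₁ ^ 3 * deriv τ s ^ 2)
          (𝓝[>] a) (𝓝 0) := by
        refine Tendsto.congr' ?_ tendsto_const_nhds
        exact eventually_of_mem hIcomem (fun x hx => (hPhi x hx).symm)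
      have := tendsto_nhds_unique ht1 ht2
      rw [hdτa] at this
      have : τ a ^ 3 * deriv τ s₁ ^ 2 = 0 := by linarith
      rcases mul_eq_zero.mp this with h | h
      · exact pow_eq_zero_iff (by norm_num) |>.mp h
      · exact absurd (pow_eq_zero_iff (by norm_num) |>.mp h) h1
    have hPsi : ∀ s ∈ Ioc a s₁,
        τ s * ((τ s₁ / deriv τ s₁ + s₁ / 2) - s / 2) ^ 2 = τ s₁ * (τ s₁ / deriv τ s₁) ^ 2 := by
      intro s hs
      have hF := hFc s hs s₁ hs₁m
      have hG := hGc s hs s₁ hs₁m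
      have : τ s / deriv τ s = τ s₁ / deriv τ s₁ + s₁ / 2 - s / 2 := by linarith
      rw [← this]
      exact hG
    have hfin : τ a * ((τ s₁ / deriv τ s₁ + s₁ / 2) - a / 2) ^ 2
        = τ s₁ * (τ s₁ / deriv τ s₁) ^ 2 := by
      have ht1 : Tendsto (fun s => τ s * ((τ s₁ / deriv τ s₁ + s₁ / 2) - s / 2) ^ 2)
          (𝓝[>] a) (𝓝 (τ a * ((τ s₁ / deriv τ s₁ + s₁ / 2) - a / 2) ^ 2)) :=
        (τcont.mul ((continuous_const.sub
          (continuous_id.div_const 2)).pow 2)).continuousAt.tendsto.mono_left nhdsWithin_le_nhds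
      have ht2 : Tendsto (fun s => τ s * ((τ s₁ / deriv τ s₁ + s₁ / 2) - s / 2) ^ 2)
          (𝓝[>] a) (𝓝 (τ s₁ * (τ s₁ / deriv τ s₁) ^ 2)) := by
        refine Tendsto.congr' ?_ tendsto_const_nhds
        exact eventually_of_mem hIcomem (fun x hx => (hPsi x hx).symm)
      exact tendsto_nhds_unique ht1 ht2
    rw [hτa, zero_mul] at hfin
    have hdiv : τ s₁ / deriv τ s₁ ≠ 0 := div_ne_zero hτs₁ h1
    exact hτs₁ (by
      rcases mul_eq_zero.mp hfin.symm with h | h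
      · exact h
      · exact absurd (pow_eq_zero_iff (by norm_num) |>.mp h) hdiv)

theorem stmt_15 (I : Set ℝ) (hIopen : IsOpen I) (hIconn : I.OrdConnected)
    (α T N B : ℝ → (Fin 3 → ℝ)) (τ : ℝ → ℝ)
    (hα : ContDiff ℝ (⊤ : ℕ∞) α) (hT : ContDiff ℝ (⊤ : ℕ∞) T)
    (hN : ContDiff ℝ (⊤ : ℕ∞) N) (hB : ContDiff ℝ (⊤ : ℕ∞) B)
    (hτ : ContDiff ℝ (⊤ : ℕ∞) τ)
    (hα' : ∀ s ∈ I, deriv α s = T s)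
    (hT' : ∀ s ∈ I, deriv T s = N s)
    (hN' : ∀ s ∈ I, deriv N s = τ s • T s - B s)
    (hB' : ∀ s ∈ I, deriv B s = (-(τ s)) • N s)
    (hTT : ∀ s ∈ I, lg (T s) (T s) = 0)
    (hBB : ∀ s ∈ I, lg (B s) (B s) = 0)
    (hNN : ∀ s ∈ I, lg (N s) (N s) = 1)
    (hTB : ∀ s ∈ I, lg (T s) (B s) = 1)
    (hTN : ∀ s ∈ I, lg (T s) (N s) = 0)
    (hNB : ∀ s ∈ I, lg (N s) (B s) = 0) :
    (∃ u : Fin 3 → ℝ, u ≠ 0 ∧ ∃ k : ℝ, ∀ s ∈ I, lg (N s) u = k) ↔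
      (∀ s ∈ I,
        det3 (iteratedDeriv 3 α s) (iteratedDeriv 4 α s) (iteratedDeriv 5 α s) = 0) := by
  -- basic differentiability facts
  have hτdiff : Differentiable ℝ τ := hτ.differentiable (by simp)
  have hdτsm : ContDiff ℝ (⊤ : ℕ∞) (deriv τ) := (contDiff_infty_iff_deriv.mp hτ).2
  have hdτdiff : Differentiable ℝ (deriv τ) := hdτsm.differentiable (by simp)
  have hτHD : ∀ s, HasDerivAt τ (deriv τ s) s := fun s => (hτdiff s).hasDerivAt
  have hddτHD : ∀ s, HasDerivAt (deriv τ) (deriv (deriv τ) s) s := fun s => (hdτdiff s).hasDerivAt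
  have τcont : Continuous τ := hτdiff.continuous
  have dτcont : Continuous (deriv τ) := hdτdiff.continuous
  have ddτcont : Continuous (deriv (deriv τ)) :=
    ((contDiff_infty_iff_deriv.mp hdτsm).2.differentiable (by simp)).continuous
  have HT : ∀ s ∈ I, HasDerivAt T (N s) s := by
    intro s hs
    have := ((hT.differentiable (by simp)) s).hasDerivAt
    rwa [hT' s hs] at this
  have HN : ∀ s ∈ I, HasDerivAt N (τ s • T s - B s) s := by
    intro s hs
    have := ((hN.differentiable (by simp)) s).hasDerivAt
    rwa [hN' s hs] at this
  have HB : ∀ s ∈ I, HasDerivAt B ((-(τ s)) • N s) s := by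
    intro s hs
    have := ((hB.differentiable (by simp)) s).hasDerivAt
    rwa [hB' s hs] at this
  -- iterated derivatives
  have e2 : ∀ s ∈ I, iteratedDeriv 2 α s = N s := by
    intro s hs
    have h1 : deriv α =ᶠ[𝓝 s] T := eventually_of_mem (hIopen.mem_nhds hs) hα'
    rw [show (2:ℕ) = 1 + 1 from rfl, iteratedDeriv_succ, iteratedDeriv_one, h1.deriv_eq,
      hT' s hs]
  have e3 : ∀ s ∈ I, iteratedDeriv 3 α s = τ s • T s - B s := by
    intro s hs
    have h2 : iteratedDeriv 2 α =ᶠ[𝓝 s] N := eventually_of_mem (hIopen.mem_nhds hs) e2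
    rw [show iteratedDeriv 3 α = deriv (iteratedDeriv 2 α) from iteratedDeriv_succ,
      h2.deriv_eq, hN' s hs]
  have e4 : ∀ s ∈ I, iteratedDeriv 4 α s = deriv τ s • T s + (2 * τ s) • N s := by
    intro s hs
    have h3 : iteratedDeriv 3 α =ᶠ[𝓝 s] (fun t => τ t • T t - B t) :=
      eventually_of_mem (hIopen.mem_nhds hs) e3
    rw [show iteratedDeriv 4 α = deriv (iteratedDeriv 3 α) from iteratedDeriv_succ,
      h3.deriv_eq]
    have H := ((hτHD s).smul (HT s hs)).sub (HB s hs)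
    have H' : HasDerivAt (fun t => τ t • T t - B t) _ s := H
    rw [H'.deriv]
    funext i
    simp only [Pi.add_apply, Pi.sub_apply, Pi.smul_apply, smul_eq_mul, Pi.neg_apply]
    ring
  have e5 : ∀ s ∈ I, iteratedDeriv 5 α s =
      (deriv (deriv τ) s + 2 * τ s ^ 2) • T s + (3 * deriv τ s) • N s - (2 * τ s) • B s := by
    intro s hs
    have h4 : iteratedDeriv 4 α =ᶠ[𝓝 s] (fun t => deriv τ t • T t + (2 * τ t) • N t) :=
      eventually_of_mem (hIopen.mem_nhds hs) e4
    rw [show iteratedDeriv 5 α = deriv (iteratedDeriv 4 α) from iteratedDeriv_succ,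
      h4.deriv_eq]
    have H := ((hddτHD s).smul (HT s hs)).add (((hτHD s).const_mul 2).smul (HN s hs))
    have H' : HasDerivAt (fun t => deriv τ t • T t + (2 * τ t) • N t) _ s := H
    rw [H'.deriv]
    funext i
    simp only [Pi.add_apply, Pi.sub_apply, Pi.smul_apply, smul_eq_mul, Pi.neg_apply]
    ring
  -- determinant identities
  have hdet1 : ∀ s ∈ I, det3 (T s) (N s) (B s) ^ 2 = 1 := by
    intro s hs
    rw [det3_sq, hTT s hs, hNN s hs, hBB s hs, hTB s hs, hTN s hs, hNB s hs]
    norm_num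
  have hdetne : ∀ s ∈ I, det3 (T s) (N s) (B s) ≠ 0 := by
    intro s hs h0
    have := hdet1 s hs
    rw [h0] at this
    norm_num at this
  have hdeteq : ∀ s ∈ I,
      det3 (iteratedDeriv 3 α s) (iteratedDeriv 4 α s) (iteratedDeriv 5 α s)
        = (2 * τ s * deriv (deriv τ) s - 3 * deriv τ s ^ 2) * det3 (T s) (N s) (B s) := by
    intro s hs
    rw [e3 s hs, e4 s hs, e5 s hs]
    simp only [det3_formula, Pi.add_apply, Pi.sub_apply, Pi.smul_apply, smul_eq_mul]
    ring
  constructor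
  · rintro ⟨u, hu, k, hk⟩
    intro s hs
    rw [hdeteq s hs]
    apply mul_eq_zero_of_left
    -- frame coefficient functions
    have hfD : ∀ x ∈ I, HasDerivAt (fun t => lg (T t) u) k x := by
      intro x hx
      have := hasDerivAt_lg_left (u := u) (HT x hx)
      rwa [hk x hx] at this
    have hhD : ∀ x ∈ I, HasDerivAt (fun t => lg (N t) u) (lg (τ x • T x - B x) u) x :=
      fun x hx => hasDerivAt_lg_left (HN x hx)
    have hpD : ∀ x ∈ I, HasDerivAt (fun t => lg (B t) u) (-(τ x) * k) x := by
      intro x hx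
      have := hasDerivAt_lg_left (u := u) (HB x hx)
      have hval : lg ((-(τ x)) • N x) u = -(τ x) * k := by
        rw [← hk x hx]
        simp only [lg, Pi.smul_apply, smul_eq_mul]
        ring
      rwa [hval] at this
    -- h' = 0 on I
    have hpe : ∀ x ∈ I, τ x * lg (T x) u - lg (B x) u = 0 := by
      intro x hx
      have hconst : (fun t => lg (N t) u) =ᶠ[𝓝 x] (fun _ => k) :=
        eventually_of_mem (hIopen.mem_nhds hx) hk
      have h1 : deriv (fun t => lg (N t) u) x = 0 := by
        rw [hconst.deriv_eq, deriv_const]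
      have h2 := (hhD x hx).deriv
      rw [h1] at h2
      have : lg (τ x • T x - B x) u = τ x * lg (T x) u - lg (B x) u := by
        simp only [lg, Pi.smul_apply, Pi.sub_apply, smul_eq_mul]
        ring
      rw [this] at h2
      linarith [h2.symm]
    -- τ' f + 2 τ k = 0 on I
    have hR : ∀ x ∈ I, deriv τ x * lg (T x) u + 2 * τ x * k = 0 := by
      intro x hx
      have hq : HasDerivAt (fun t => τ t * lg (T t) u) (deriv τ x * lg (T x) u + τ x * k) x :=
        (hτHD x).mul (hfD x hx)
      have heq : (fun t => τ t * lg (T t) u) =ᶠ[𝓝 x] (fun t => lg (B t) u) := by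
        refine eventually_of_mem (hIopen.mem_nhds hx) (fun y hy => ?_)
        have := hpe y hy
        show τ y * lg (T y) u = lg (B y) u
        linarith
      have := heq.deriv_eq
      rw [hq.deriv, (hpD x hx).deriv] at this
      linarith
    -- τ'' f + 3 τ' k = 0 on I
    have hR2 : ∀ x ∈ I, deriv (deriv τ) x * lg (T x) u + 3 * deriv τ x * k = 0 := by
      intro x hx
      have hRd : HasDerivAt (fun t => deriv τ t * lg (T t) u + 2 * τ t * k)
          (deriv (deriv τ) x * lg (T x) u + deriv τ x * k + 2 * deriv τ x * k) x := by
        have h1 := (hddτHD x).mul (hfD x hx)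
        have h2 := ((hτHD x).const_mul 2).mul_const k
        exact h1.add h2
      have heq : (fun t => deriv τ t * lg (T t) u + 2 * τ t * k) =ᶠ[𝓝 x] (fun _ => (0:ℝ)) :=
        eventually_of_mem (hIopen.mem_nhds hx) hR
      have h3 := heq.deriv_eq
      rw [hRd.deriv, deriv_const] at h3
      linarith
    by_cases hk0 : k = 0
    · -- k = 0 : f is constant on I
      subst hk0
      have hf0 : ∀ x ∈ I, HasDerivAt (fun t => lg (T t) u) 0 x := hfD
      have hfc := const_on_of_hasDerivAt_zero hIconn hf0
      by_cases hfs : lg (T s) u = 0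
      · -- f ≡ 0, then u = 0, contradiction
        exfalso
        apply hu
        refine eq_zero_of_lg_eq_zero (T s) (N s) (B s) u (hdetne s hs) hfs ?_ ?_
        · rw [hk s hs]
        · have := hpe s hs
          rw [hfs] at this
          linarith
      · have h1 := hR s hs
        have h2 := hR2 s hs
        have hd1 : deriv τ s = 0 := by
          have : deriv τ s * lg (T s) u = 0 := by linarith
          exact (mul_eq_zero.mp this).resolve_right hfs
        have hd2 : deriv (deriv τ) s = 0 := by
          have : deriv (deriv τ) s * lg (T s) u = 0 := by
            rw [hd1] at h2; linarith
          exact (mul_eq_zero.mp this).resolve_right hfs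
        rw [hd1, hd2]; ring
    · -- k ≠ 0
      have key : ∀ x ∈ I, (2 * τ x * deriv (deriv τ) x - 3 * deriv τ x ^ 2) * lg (T x) u = 0 := by
        intro x hx
        linear_combination (2 * τ x) * (hR2 x hx) + (-3 * deriv τ x) * (hR x hx)
      by_cases hfs : lg (T s) u = 0
      · -- isolated zero of f: use continuity
        have hev : ∀ᶠ x in 𝓝[≠] s, lg (T x) u ≠ 0 := by
          have := (hfD s hs).eventually_ne (c := lg (T s) u) hk0
          filter_upwards [this] with x hx
          rwa [hfs] at hx
        have hevI : ∀ᶠ x in 𝓝[≠] s, x ∈ I :=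
          (eventually_of_mem (hIopen.mem_nhds hs) (fun y hy => hy)).filter_mono
            nhdsWithin_le_nhds
        have hG0 : ∀ᶠ x in 𝓝[≠] s, 2 * τ x * deriv (deriv τ) x - 3 * deriv τ x ^ 2 = 0 := by
          filter_upwards [hev, hevI] with x h1 h2
          exact (mul_eq_zero.mp (key x h2)).resolve_right h1
        have Gcont : Continuous (fun x => 2 * τ x * deriv (deriv τ) x - 3 * deriv τ x ^ 2) :=
          ((continuous_const.mul τcont).mul ddτcont).sub (continuous_const.mul (dτcont.pow 2))
        have ht1 : Tendsto (fun x => 2 * τ x * deriv (deriv τ) x - 3 * deriv τ x ^ 2)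
            (𝓝[≠] s) (𝓝 (2 * τ s * deriv (deriv τ) s - 3 * deriv τ s ^ 2)) :=
          Gcont.continuousAt.tendsto.mono_left nhdsWithin_le_nhds
        have ht2 : Tendsto (fun x => 2 * τ x * deriv (deriv τ) x - 3 * deriv τ x ^ 2)
            (𝓝[≠] s) (𝓝 0) := by
          refine Tendsto.congr' ?_ tendsto_const_nhds
          filter_upwards [hG0] with x hx
          exact hx.symm
        exact tendsto_nhds_unique ht1 ht2
      · exact (mul_eq_zero.mp (key s hs)).resolve_right hfs
  · -- (ii) → (i)
    intro hdet0
    have E : ∀ s ∈ I, 2 * τ s * deriv (deriv τ) s = 3 * (deriv τ s) ^ 2 := by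
      intro s hs
      have := hdet0 s hs
      rw [hdeteq s hs] at this
      rcases mul_eq_zero.mp this with h | h
      · linarith
      · exact absurd h (hdetne s hs)
    rcases Set.eq_empty_or_nonempty I with hIe | ⟨s₀, hs₀⟩
    · refine ⟨(fun _ => 1), ?_, 0, ?_⟩
      · intro h0
        have := congrFun h0 0
        norm_num at this
      · intro s hs
        rw [hIe] at hs
        exact absurd hs (Set.notMem_empty s)
    · by_cases hcase : ∀ x ∈ I, deriv τ x = 0
      · -- τ constant: axis τ•T + B
        have hW0 : ∀ x ∈ I, HasDerivAt (fun t => τ t • T t + B t) 0 x := by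
          intro x hx
          have H : HasDerivAt (fun t => τ t • T t + B t) (τ x • N x + deriv τ x • T x + (-(τ x)) • N x) x := ((hτHD x).smul (HT x hx)).add (HB x hx)
          convert H using 1
          funext i
          simp only [Pi.add_apply, Pi.smul_apply, smul_eq_mul, Pi.neg_apply, Pi.zero_apply,
            hcase x hx]
          ring
        have hWc := const_on_of_hasDerivAt_zero hIconn hW0
        refine ⟨τ s₀ • T s₀ + B s₀, ?_, 0, ?_⟩
        · intro h0
          have h1 : lg (T s₀) (τ s₀ • T s₀ + B s₀) = 1 := by
            have : lg (T s₀) (τ s₀ • T s₀ + B s₀)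
                = τ s₀ * lg (T s₀) (T s₀) + lg (T s₀) (B s₀) := by
              simp only [lg, Pi.add_apply, Pi.smul_apply, smul_eq_mul]; ring
            rw [this, hTT s₀ hs₀, hTB s₀ hs₀]; ring
          rw [h0] at h1
          simp only [lg, Pi.zero_apply] at h1
          norm_num at h1
        · intro s hs
          have hWs : τ s₀ • T s₀ + B s₀ = τ s • T s + B s := hWc s₀ hs₀ s hs
          rw [hWs]
          have hexp : lg (N s) (τ s • T s + B s)
              = τ s * lg (T s) (N s) + lg (N s) (B s) := by
            simp only [lg, Pi.add_apply, Pi.smul_apply, smul_eq_mul]; ring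
          rw [hexp, hTN s hs, hNB s hs]; ring
      · push_neg at hcase
        obtain ⟨s₁, hs₁, h1⟩ := hcase
        have hall : ∀ b ∈ I, deriv τ b ≠ 0 := dichotomy hIconn hτ E hs₁ h1
        -- axis: (τ g)•T + N + g•B with g = -2τ/τ'
        have hW0 : ∀ x ∈ I, HasDerivAt
            (fun t => (τ t * (-2 * τ t / deriv τ t)) • T t + N t
              + (-2 * τ t / deriv τ t) • B t) 0 x := by
          intro x hx
          have hdx := hall x hx
          have hg : HasDerivAt (fun t => -2 * τ t / deriv τ t)
              ((-2 * deriv τ x * deriv τ x - -2 * τ x * deriv (deriv τ) x) / deriv τ x ^ 2)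
              x := by
            have : HasDerivAt (fun t => -2 * τ t / deriv τ t) _ x :=
              (((hτHD x).const_mul (-2)).div (hddτHD x) hdx)
            convert this using 2 <;> ring
          have hp : HasDerivAt (fun t => τ t * (-2 * τ t / deriv τ t))
              (deriv τ x * (-2 * τ x / deriv τ x)
                + τ x * ((-2 * deriv τ x * deriv τ x - -2 * τ x * deriv (deriv τ) x)
                  / deriv τ x ^ 2)) x := (hτHD x).mul hg
          have H : HasDerivAt (fun t => (τ t * (-2 * τ t / deriv τ t)) • T t + N t
              + (-2 * τ t / deriv τ t) • B t) _ x :=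
            ((hp.smul (HT x hx)).add (HN x hx)).add (hg.smul (HB x hx))
          convert H using 1
          funext i
          simp only [Pi.add_apply, Pi.sub_apply, Pi.smul_apply, smul_eq_mul, Pi.neg_apply,
            Pi.zero_apply]
          field_simp
          linear_combination (-(τ x * T x i + B x i)) * (E x hx)
        have hWc := const_on_of_hasDerivAt_zero hIconn hW0
        set W := fun t => (τ t * (-2 * τ t / deriv τ t)) • T t + N t
          + (-2 * τ t / deriv τ t) • B t with hWdef
        have hlgW : ∀ s ∈ I, lg (N s) (W s) = 1 := by
          intro s hs
          have hexp : lg (N s) (W s) = (τ s * (-2 * τ s / deriv τ s)) * lg (T s) (N s)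
              + lg (N s) (N s) + (-2 * τ s / deriv τ s) * lg (N s) (B s) := by
            simp only [hWdef, lg, Pi.add_apply, Pi.smul_apply, smul_eq_mul]; ring
          rw [hexp, hTN s hs, hNN s hs, hNB s hs]; ring
        refine ⟨W s₀, ?_, 1, ?_⟩
        · intro h0
          have h1' := hlgW s₀ hs₀
          rw [h0] at h1'
          simp only [lg, Pi.zero_apply] at h1'
          norm_num at h1'
        · intro s hs
          have hWs : W s₀ = W s := hWc s₀ hs₀ s hs
          rw [hWs]
          exact hlgW s hs
end
end

section
/- Let I ⊆ ℝ be an open interval, let α : ℝ → ℝ³ be smooth, and let T, N, B : ℝ → ℝ³ and τ : ℝ → ℝ be smooth maps such that on I: α' = T, T' = N, N' = τ T − B, B' = −τ N, and for all s ∈ I: g(T(s),T(s)) = 0, g(B(s),B(s)) = 0, g(N(s),N(s)) = 1, g(T(s),B(s)) = 1, g(T(s),N(s)) = 0, g(N(s),B(s)) = 0. Then there exists a vector u ∈ ℝ³ with u ≠ 0 such that s ↦ g(N(s), u) is constant on I if and only if there exist real constants a, b, c with b·s + c ≠ 0 for all s ∈ I and τ(s) = a / (b·s + c)² for all s ∈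 I. -/
noncomputable section

lemma hasDerivAt_lg {f g : ℝ → Fin 3 → ℝ} {f' g' : Fin 3 → ℝ} {s : ℝ}
    (hf : HasDerivAt f f' s) (hg : HasDerivAt g g' s) :
    HasDerivAt (fun t => lg (f t) (g t)) (lg f' (g s) + lg (f s) g') s := by
  have hfi : ∀ i, HasDerivAt (fun t => f t i) (f' i) s := hasDerivAt_pi.1 hf
  have hgi : ∀ i, HasDerivAt (fun t => g t i) (g' i) s := hasDerivAt_pi.1 hg
  have h := (((hfi 0).mul (hgi 0)).neg.add ((hfi 1).mul (hgi 1))).add ((hfi 2).mul (hgi 2))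
  convert h using 1
  · rfl
  · rfl
  · ext t; simp only [lg, Pi.add_apply, Pi.neg_apply, Pi.mul_apply]
  all_goals simp only [lg]; ring

lemma const_on {E : Type*} [NormedAddCommGroup E] [NormedSpace ℝ E] {I : Set ℝ}
    (hI : I.OrdConnected) {f : ℝ → E} (hf : ∀ s ∈ I, HasDerivAt f 0 s)
    {x y : ℝ} (hx : x ∈ I) (hy : y ∈ I) : f x = f y := by
  have hc : Convex ℝ I := convex_iff_ordConnected.2 hI
  have := hc.norm_image_sub_le_of_norm_hasFDerivWithin_le
    (f' := fun _ => (0 : ℝ →L[ℝ] E)) (C := 0)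
    (fun s hs => ((hf s hs).hasFDerivAt.hasFDerivWithinAt).congr_fderiv (by ext; simp))
    (fun s hs => by simp) hy hx
  have h0 : ‖f x - f y‖ = 0 := le_antisymm (by simpa using this) (norm_nonneg _)
  have := norm_eq_zero.1 h0
  exact sub_eq_zero.1 this

lemma lg_zero_right (x : Fin 3 → ℝ) : lg x 0 = 0 := by simp [lg]

lemma lg_comm (x y : Fin 3 → ℝ) : lg x y = lg y x := by simp [lg]; ring

lemma lg_smul_sub_left (c : ℝ) (x y z : Fin 3 → ℝ) :
    lg (c • x - y) z = c * lg x z - lg y z := by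
  simp [lg, Pi.sub_apply, Pi.smul_apply, smul_eq_mul]; ring

lemma lg_neg_smul_left (c : ℝ) (x z : Fin 3 → ℝ) :
    lg (c • x) z = c * lg x z := by
  simp [lg, Pi.smul_apply, smul_eq_mul]; ring

lemma frame_nondeg (T N B u : Fin 3 → ℝ) (hTT : lg T T = 0) (hBB : lg B B = 0)
    (hNN : lg N N = 1) (hTB : lg T B = 1) (hTN : lg T N = 0) (hNB : lg N B = 0)
    (h1 : lg T u = 0) (h2 : lg N u = 0) (h3 : lg B u = 0) : u = 0 := by
  simp only [lg] at *
  set M : Matrix (Fin 3) (Fin 3) ℝ := Matrix.of ![T, N, B] with hM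
  set η : Matrix (Fin 3) (Fin 3) ℝ := Matrix.diagonal ![-1, 1, 1] with hη
  have hG : M * η * M.transpose = !![0,0,1;0,1,0;1,0,0] := by
    ext i j
    fin_cases i <;> fin_cases j <;>
      · simp [hM, hη, Matrix.mul_apply, Matrix.diagonal, Fin.sum_univ_three,
          Matrix.transpose_apply, Matrix.vecMul, dotProduct, Matrix.vecHead,
          Matrix.vecTail, Matrix.cons_val_zero, Matrix.cons_val_one]
        linarith
  have hdet : M.det ^ 2 = 1 := by
    have h1 : (M * η * M.transpose).det = M.det * η.det * M.det := by
      rw [Matrix.det_mul, Matrix.det_mul, Matrix.det_transpose]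
    have h2 : η.det = -1 := by simp [hη, Fin.prod_univ_three]
    have h3 : (!![0,0,1;0,1,0;1,0,0] : Matrix (Fin 3) (Fin 3) ℝ).det = -1 := by
      simp [Matrix.det_fin_three]
    rw [hG, h3, h2] at h1
    nlinarith [h1]
  have hunit : IsUnit M.det := by
    refine isUnit_iff_ne_zero.2 ?_
    intro h; rw [h] at hdet; norm_num at hdet
  set w : Fin 3 → ℝ := ![-(u 0), u 1, u 2] with hw
  have hMw : M.mulVec w = 0 := by
    funext i
    fin_cases i <;>
      · simp [hM, hw, Matrix.mulVec, dotProduct, Fin.sum_univ_three]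
        linarith
  have hw0 : w = 0 := by
    have := congrArg (M⁻¹.mulVec) hMw
    rwa [Matrix.mulVec_mulVec, Matrix.nonsing_inv_mul M hunit, Matrix.one_mulVec,
      Matrix.mulVec_zero] at this
  funext i
  fin_cases i
  · have := congrFun hw0 0; simp [hw] at this; simpa using this
  · have := congrFun hw0 1; simpa [hw] using this
  · have := congrFun hw0 2; simpa [hw] using this

theorem stmt_16 (I : Set ℝ) (hIopen : IsOpen I) (hIconn : I.OrdConnected)
    (α T N B : ℝ → (Fin 3 → ℝ)) (τ : ℝ → ℝ)
    (hα : ContDiff ℝ (⊤ : ℕ∞) α) (hT : ContDiff ℝ (⊤ : ℕ∞) T)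
    (hN : ContDiff ℝ (⊤ : ℕ∞) N) (hB : ContDiff ℝ (⊤ : ℕ∞) B)
    (hτ : ContDiff ℝ (⊤ : ℕ∞) τ)
    (hα' : ∀ s ∈ I, deriv α s = T s)
    (hT' : ∀ s ∈ I, deriv T s = N s)
    (hN' : ∀ s ∈ I, deriv N s = τ s • T s - B s)
    (hB' : ∀ s ∈ I, deriv B s = (-(τ s)) • N s)
    (hTT : ∀ s ∈ I, lg (T s) (T s) = 0)
    (hBB : ∀ s ∈ I, lg (B s) (B s) = 0)
    (hNN : ∀ s ∈ I, lg (N s) (N s) = 1)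
    (hTB : ∀ s ∈ I, lg (T s) (B s) = 1)
    (hTN : ∀ s ∈ I, lg (T s) (N s) = 0)
    (hNB : ∀ s ∈ I, lg (N s) (B s) = 0) :
    (∃ u : Fin 3 → ℝ, u ≠ 0 ∧ ∃ k : ℝ, ∀ s ∈ I, lg (N s) u = k) ↔
      (∃ a b c : ℝ, (∀ s ∈ I, b * s + c ≠ 0) ∧
        ∀ s ∈ I, τ s = a / (b * s + c) ^ 2) := by
  rcases Set.eq_empty_or_nonempty I with hIe | ⟨s₀, hs₀⟩
  · constructor
    · intro _
      exact ⟨0, 0, 1, by simp [hIe], by simp [hIe]⟩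
    · intro _
      refine ⟨fun _ => 1, ?_, 0, by simp [hIe]⟩
      intro h
      have := congrFun h 0
      norm_num at this
  -- derivative facts
  have dT : ∀ s ∈ I, HasDerivAt T (N s) s := fun s hs =>
    hT' s hs ▸ ((hT.differentiable (by simp)) s).hasDerivAt
  have dN : ∀ s ∈ I, HasDerivAt N (τ s • T s - B s) s := fun s hs =>
    hN' s hs ▸ ((hN.differentiable (by simp)) s).hasDerivAt
  have dB : ∀ s ∈ I, HasDerivAt B ((-(τ s)) • N s) s := fun s hs =>
    hB' s hs ▸ ((hB.differentiable (by simp)) s).hasDerivAt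
  have dτ : ∀ s : ℝ, HasDerivAt τ (deriv τ s) s := fun s =>
    ((hτ.differentiable (by simp)) s).hasDerivAt
  constructor
  · -- forward
    rintro ⟨u, hu, k, hk⟩
    have dt : ∀ s ∈ I, HasDerivAt (fun r => lg (T r) u) k s := by
      intro s hs
      have h := hasDerivAt_lg (dT s hs) (hasDerivAt_const s u)
      rwa [lg_zero_right, add_zero, hk s hs] at h
    have dbf : ∀ s ∈ I, HasDerivAt (fun r => lg (B r) u) (-(τ s) * k) s := by
      intro s hs
      have h := hasDerivAt_lg (dB s hs) (hasDerivAt_const s u)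
      rwa [lg_zero_right, add_zero, lg_neg_smul_left, hk s hs] at h
    have hτtb : ∀ s ∈ I, τ s * lg (T s) u = lg (B s) u := by
      intro s hs
      have h := hasDerivAt_lg (dN s hs) (hasDerivAt_const s u)
      rw [lg_zero_right, add_zero, lg_smul_sub_left] at h
      have heq : (fun r => lg (N r) u) =ᶠ[nhds s] fun _ => k := by
        filter_upwards [hIopen.mem_nhds hs] with r hr using hk r hr
      have h2 : HasDerivAt (fun r => lg (N r) u) 0 s :=
        (hasDerivAt_const s k).congr_of_eventuallyEq heq
      have := h2.unique h
      linarith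
    have h4 : ∀ s ∈ I, deriv τ s * lg (T s) u = -2 * k * τ s := by
      intro s hs
      have hf₁ : HasDerivAt (fun r => τ r * lg (T r) u)
          (deriv τ s * lg (T s) u + τ s * k) s := (dτ s).mul (dt s hs)
      have heq : (fun r => lg (B r) u) =ᶠ[nhds s] fun r => τ r * lg (T r) u := by
        filter_upwards [hIopen.mem_nhds hs] with r hr using (hτtb r hr).symm
      have hf₂ : HasDerivAt (fun r => τ r * lg (T r) u) (-(τ s) * k) s :=
        (dbf s hs).congr_of_eventuallyEq heq.symm
      have := hf₁.unique hf₂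
      linarith
    -- t is affine
    set c₀ : ℝ := lg (T s₀) u - k * s₀ with hc₀
    have haff : ∀ s ∈ I, lg (T s) u = k * s + c₀ := by
      intro s hs
      have hg : ∀ r ∈ I, HasDerivAt (fun r => lg (T r) u - k * r) 0 r := by
        intro r hr
        have h1 : HasDerivAt (fun r : ℝ => k * r) k r := by
          simpa using (hasDerivAt_id r).const_mul k
        have := (dt r hr).sub h1; rwa [sub_self] at this
      have := const_on hIconn hg hs hs₀
      simp only [hc₀]; linarith
    -- τ t² constant
    have hF : ∀ s ∈ I, τ s * lg (T s) u ^ 2 = τ s₀ * lg (T s₀) u ^ 2 := by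
      intro s hs
      refine const_on hIconn (f := fun r => τ r * lg (T r) u ^ 2) (fun r hr => ?_) hs hs₀
      have h := (dτ r).mul ((dt r hr).pow 2)
      convert h using 1
      · rfl
      · rfl
      push_cast
      norm_num
      linear_combination -(lg (T r) u) * (h4 r hr)
    by_cases hz : ∃ s₁ ∈ I, lg (T s₁) u = 0
    · obtain ⟨s₁, hs₁, ht₁⟩ := hz
      have hA : τ s₀ * lg (T s₀) u ^ 2 = 0 := by
        have := hF s₁ hs₁
        rw [ht₁] at this
        simpa using this.symm
      by_cases hk0 : k = 0
      · -- contradiction : u = 0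
        exfalso
        have ht0 : ∀ s ∈ I, lg (T s) u = 0 := by
          intro s hs
          have h1 := haff s hs
          have h2 := haff s₁ hs₁
          rw [ht₁] at h2
          rw [hk0, zero_mul, zero_add] at h1 h2
          rw [h1, ← h2]
        have hb0 : lg (B s₀) u = 0 := by
          have := hτtb s₀ hs₀
          rw [ht0 s₀ hs₀] at this
          simpa using this.symm
        have hn0 : lg (N s₀) u = 0 := by rw [hk s₀ hs₀, hk0]
        exact hu (frame_nondeg (T s₀) (N s₀) (B s₀) u (hTT s₀ hs₀) (hBB s₀ hs₀)
          (hNN s₀ hs₀) (hTB s₀ hs₀) (hTN s₀ hs₀) (hNB s₀ hs₀) (ht0 s₀ hs₀) hn0 hb0)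
      · -- τ ≡ 0
        refine ⟨0, 0, 1, fun s _ => by norm_num, fun s hs => ?_⟩
        have hτ0 : τ s = 0 := by
          by_cases hts : lg (T s) u = 0
          · have := h4 s hs
            rw [hts] at this
            simp at this
            rcases this with h | h
            · exact absurd h hk0
            · exact h
          · have h1 := hF s hs
            rw [hA] at h1
            have := mul_eq_zero.1 h1
            rcases this with h | h
            · exact h
            · exact absurd (pow_eq_zero_iff (two_ne_zero)|>.1 h) hts
        rw [hτ0]; norm_num
    · push_neg at hz
      refine ⟨τ s₀ * lg (T s₀) u ^ 2, k, c₀, fun s hs => ?_, fun s hs => ?_⟩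
      · rw [← haff s hs]; exact hz s hs
      · rw [← haff s hs]
        rw [eq_div_iff (pow_ne_zero 2 (hz s hs))]
        exact hF s hs
  · -- reverse
    rintro ⟨a, b, c, hne, hτeq⟩
    by_cases hab : a = 0 ∨ b = 0
    · -- τ constant on I
      have hconstτ : ∀ s ∈ I, τ s = τ s₀ := by
        intro s hs
        rcases hab with ha | hb
        · rw [hτeq s hs, hτeq s₀ hs₀, ha]; simp
        · rw [hτeq s hs, hτeq s₀ hs₀, hb]; simp
      set v : ℝ → (Fin 3 → ℝ) := fun s => τ s₀ • T s + B s with hv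
      have dv : ∀ s ∈ I, HasDerivAt v 0 s := by
        intro s hs
        have h := ((dT s hs).const_smul (τ s₀)).add (dB s hs)
        have he : τ s₀ • N s + (-(τ s)) • N s = 0 := by
          rw [hconstτ s hs]
          ext i
          simp [Pi.smul_apply, smul_eq_mul]
        rwa [he] at h
      refine ⟨v s₀, ?_, 0, ?_⟩
      · intro h0
        have h1 : lg (T s₀) (v s₀) = 1 := by
          simp only [hv, lg, Pi.add_apply, Pi.smul_apply, smul_eq_mul]
          have e1 := hTT s₀ hs₀
          have e2 := hTB s₀ hs₀
          simp only [lg] at e1 e2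
          linear_combination τ s₀ * e1 + e2
        rw [h0, lg_zero_right] at h1
        norm_num at h1
      · intro s hs
        have hvs : v s = v s₀ := const_on hIconn dv hs hs₀
        rw [← hvs]
        simp only [hv, lg, Pi.add_apply, Pi.smul_apply, smul_eq_mul]
        have e1 := hTN s hs
        have e2 := hNB s hs
        simp only [lg] at e1 e2
        linear_combination τ s₀ * e1 + e2
    · push_neg at hab
      obtain ⟨ha, hb⟩ := hab
      set p : ℝ → ℝ := fun s => a / (b * (b * s + c)) with hp
      set r : ℝ → ℝ := fun s => (b * s + c) / b with hr
      set v : ℝ → (Fin 3 → ℝ) := fun s => p s • T s + N s + r s • B s with hv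
      have dv : ∀ s ∈ I, HasDerivAt v 0 s := by
        intro s hs
        have hbs := hne s hs
        have hden : HasDerivAt (fun s => b * (b * s + c)) (b * b) s := by
          have h1 : HasDerivAt (fun s : ℝ => b * s + c) b s := by
            simpa using ((hasDerivAt_id s).const_mul b).add_const c
          simpa using h1.const_mul b
        have dp : HasDerivAt p (-(τ s)) s := by
          have h := (hasDerivAt_const s a).div hden (mul_ne_zero hb hbs)
          have heq : (0 * (b * (b * s + c)) - a * (b * b)) / (b * (b * s + c)) ^ 2
              = -(τ s) := by
            rw [hτeq s hs]
            field_simp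
            ring
          rwa [heq] at h
        have dr : HasDerivAt r 1 s := by
          have h1 : HasDerivAt (fun s : ℝ => b * s + c) b s := by
            simpa using ((hasDerivAt_id s).const_mul b).add_const c
          have h := h1.div_const b
          simpa [hr, div_self hb] using h
        have h := (((dp.smul (dT s hs)).add (dN s hs)).add (dr.smul (dB s hs)))
        have he : p s • N s + (-(τ s)) • T s + (τ s • T s - B s) +
            (r s • ((-(τ s)) • N s) + (1 : ℝ) • B s) = 0 := by
          have hprτ : p s = r s * τ s := by
            rw [hτeq s hs, hp, hr]
            field_simp
          ext i
          simp only [Pi.add_apply, Pi.sub_apply, Pi.smul_apply, smul_eq_mul,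
            Pi.zero_apply, one_mul]
          rw [hprτ]
          ring
        rwa [he] at h
      refine ⟨v s₀, ?_, 1, ?_⟩
      · intro h0
        have h1 : lg (N s₀) (v s₀) = 1 := by
          simp only [hv, lg, Pi.add_apply, Pi.smul_apply, smul_eq_mul]
          have e1 := hTN s₀ hs₀
          have e2 := hNN s₀ hs₀
          have e3 := hNB s₀ hs₀
          simp only [lg] at e1 e2 e3
          linear_combination p s₀ * e1 + e2 + r s₀ * e3
        rw [h0, lg_zero_right] at h1
        norm_num at h1
      · intro s hs
        have hvs : v s = v s₀ := const_on hIconn dv hs hs₀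
        rw [← hvs]
        simp only [hv, lg, Pi.add_apply, Pi.smul_apply, smul_eq_mul]
        have e1 := hTN s hs
        have e2 := hNN s hs
        have e3 := hNB s hs
        simp only [lg] at e1 e2 e3
        linear_combination p s * e1 + e2 + r s * e3
end
end

section
/- Define α : (0, ∞) → ℝ³ by α(s) = (1/6)·( s⁵/5 − 1/s , s² , s⁵/5 + 1/s ). Then for every s > 0: g(α'(s), α'(s)) = 0, g(α''(s), α''(s)) = 1, and det(α⁽³⁾(s), α⁽⁴⁾(s), α⁽⁵⁾(s)) = 0. -/
noncomputable section

def VA : ℕ → ℝ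
  | 0 => 1/30 | 1 => 1/6 | 2 => 2/3 | 3 => 2 | 4 => 4 | _ => 4

def VB : ℕ → ℝ
  | 0 => -(1/6) | 1 => 1/6 | 2 => -(1/3) | 3 => 1 | 4 => -4 | _ => 20

def VC : ℕ → ℝ
  | 0 => 1/6 | 1 => 1/3 | 2 => 1/3 | _ => 0

def V (k : ℕ) (s : ℝ) : Fin 3 → ℝ :=
  ![VA k * s ^ ((5:ℤ) - k) + VB k * s ^ ((-1:ℤ) - k),
    VC k * s ^ ((2:ℤ) - k),
    VA k * s ^ ((5:ℤ) - k) - VB k * s ^ ((-1:ℤ) - k)]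

lemma hVderiv (k : ℕ) (hk : k ≤ 4) (s : ℝ) (hs : s ≠ 0) :
    HasDerivAt (fun t => V k t) (V (k+1) s) s := by
  rw [hasDerivAt_pi]
  intro i
  fin_cases i <;> simp only [V, Fin.zero_eta, Fin.mk_one, Fin.reduceFinMk, Fin.isValue, Matrix.cons_val_zero, Matrix.cons_val_one, Matrix.head_cons,
    Matrix.cons_val_two, Matrix.tail_cons]
  · have h := ((hasDerivAt_zpow ((5:ℤ) - k) s (Or.inl hs)).const_mul (VA k)).add
      ((hasDerivAt_zpow ((-1:ℤ) - k) s (Or.inl hs)).const_mul (VB k))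
    convert h using 1
    · rfl
    interval_cases k <;> norm_num [VA, VB] <;> ring
  · have h := (hasDerivAt_zpow ((2:ℤ) - k) s (Or.inl hs)).const_mul (VC k)
    convert h using 1
    · rfl
    interval_cases k <;> norm_num [VC] <;> ring
  · have h := ((hasDerivAt_zpow ((5:ℤ) - k) s (Or.inl hs)).const_mul (VA k)).sub
      ((hasDerivAt_zpow ((-1:ℤ) - k) s (Or.inl hs)).const_mul (VB k))
    convert h using 1
    · rfl
    interval_cases k <;> norm_num [VA, VB] <;> ring

theorem stmt_17 (α : ℝ → (Fin 3 → ℝ))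
    (hαdef : α = fun s =>
      ![(1 / 6) * (s ^ 5 / 5 - 1 / s), (1 / 6) * s ^ 2, (1 / 6) * (s ^ 5 / 5 + 1 / s)]) :
    ∀ s : ℝ, 0 < s →
      lg (deriv α s) (deriv α s) = 0 ∧
      lg (deriv (deriv α) s) (deriv (deriv α) s) = 1 ∧
      det3 (iteratedDeriv 3 α s) (iteratedDeriv 4 α s) (iteratedDeriv 5 α s) = 0 := by
  have hα0 : α = V 0 := by
    funext s
    rw [hαdef]
    funext i
    fin_cases i <;>
      simp [V, VA, VB, VC] <;> norm_cast <;> ring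
  have main : ∀ k, k ≤ 5 → ∀ s : ℝ, 0 < s → iteratedDeriv k α s = V k s := by
    intro k
    induction k with
    | zero => intro _ s _; rw [iteratedDeriv_zero, hα0]
    | succ k ih =>
      intro hk s hs
      rw [iteratedDeriv_succ]
      have hev : iteratedDeriv k α =ᶠ[nhds s] V k := by
        filter_upwards [isOpen_Ioi.mem_nhds (show s ∈ Set.Ioi (0:ℝ) from hs)] with t ht
        exact ih (by omega) t ht
      rw [hev.deriv_eq]
      exact (hVderiv k (by omega) s hs.ne').deriv
  intro s hs
  have h1 : deriv α s = V 1 s := by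
    have := main 1 (by norm_num) s hs
    rwa [iteratedDeriv_one] at this
  have h2 : deriv (deriv α) s = V 2 s := by
    have := main 2 (by norm_num) s hs
    rwa [iteratedDeriv_succ, iteratedDeriv_one] at this
  refine ⟨?_, ?_, ?_⟩
  · rw [h1]
    simp only [lg, V, VA, VB, VC, Matrix.cons_val_zero, Matrix.cons_val_one, Matrix.head_cons,
      Matrix.cons_val_two, Matrix.tail_cons]
    have h4 : s ^ (4:ℤ) = s^4 := by norm_cast
    have h1' : s ^ (1:ℤ) = s := zpow_one s
    have hm2 : s ^ (-2:ℤ) = (s^2)⁻¹ := by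
      rw [zpow_neg]; norm_cast
    norm_num [h4, h1', hm2]
    field_simp
    ring
  · rw [h2]
    simp only [lg, V, VA, VB, VC, Matrix.cons_val_zero, Matrix.cons_val_one, Matrix.head_cons,
      Matrix.cons_val_two, Matrix.tail_cons]
    have h3 : s ^ (3:ℤ) = s^3 := by norm_cast
    have h0 : s ^ (0:ℤ) = 1 := by norm_num
    have hm3 : s ^ (-3:ℤ) = (s^3)⁻¹ := by rw [zpow_neg]; norm_cast
    norm_num [h3, h0, hm3]
    field_simp
    ring
  · rw [main 3 (by norm_num) s hs, main 4 (by norm_num) s hs, main 5 (by norm_num) s hs]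
    simp only [det3, V, VA, VB, VC]
    rw [Matrix.det_fin_three]
    simp [Matrix.of_apply, Matrix.vecHead, Matrix.vecTail]
end
end
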